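/- arXiv:0912.0850 — 6 statements merged into one kernel-verified Lean document; each statement's English description precedes it below -/
import Mathlib

section
/- For any string s of length n ≥ 1, the number of phrases in the (non-self-referencing) LZ77 parse of s is at most the size of the smallest context-free grammar that generates s and only s. -/
open List

/-- The (non-self-referencing) greedy LZ77 parse of `s`: the phrases are nonempty and
concatenate to `s`; each phrase is a single character or an infix of the already-parsed
prefix, and each phrase is a longest prefix of the unparsed suffix occurring in the
parsed prefix. -/
def IsLZ77Parse {α : Type} (s : List α) (P : List (List α)) : Prop :=
  P.flatten = s ∧ (∀ p ∈ P, p ≠ []) ∧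
  ∀ i : Fin P.length,
    ((P.get i).length = 1 ∨ P.get i <:+: (P.take i.1).flatten) ∧
    ∀ q : List α, q <+: (P.drop i.1).flatten → q <:+: (P.take i.1).flatten →
      q.length ≤ max (P.get i).length 1

/-- The size of a context-free grammar: total number of symbols on right-hand sides. -/
noncomputable def grammarSize {T : Type} (G : ContextFreeGrammar T) : ℕ :=
  ∑ r ∈ G.rules, r.output.length

/-- A grammar is in Chomsky normal form: every rule is `A → a` or `A → B C`. -/
def IsCNF {T : Type} (G : ContextFreeGrammar T) : Prop :=
  ∀ r ∈ G.rules, (∃ a : T, r.output = [Symbol.terminal a]) ∨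
    (∃ B C : G.NT, r.output = [Symbol.nonterminal B, Symbol.nonterminal C])

/-!
Rytter's argument. Walk through a derivation tree of `s` from left to right. A terminal leaf
becomes a one-letter phrase. A nonterminal whose rule has already been expanded has occurred
before, and because the grammar generates only `s` its yield is the same word as then, so that
yield becomes one phrase that occurs earlier. Any other nonterminal is expanded, for the first
time for its rule, and its right-hand side pays for the phrases produced below it. This gives a
factorization of `s` into letters and earlier-occurring factors with at most as many phrases as
the grammar has right-hand-side symbols, and the greedy LZ77 parse has no more phrases than any
such factorization, since its `k`-th phrase ends no earlier than the `k`-th factor.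
-/

namespace ContextFreeRule

variable {T N : Type*} {r : ContextFreeRule T N}

lemma Rewrites.exists_of_append {u₁ u₂ v : List (Symbol T N)} (h : r.Rewrites (u₁ ++ u₂) v) :
    (∃ v₁, r.Rewrites u₁ v₁ ∧ v = v₁ ++ u₂) ∨ (∃ v₂, r.Rewrites u₂ v₂ ∧ v = u₁ ++ v₂) := by
  induction u₁ generalizing v with
  | nil => exact .inr ⟨v, h, rfl⟩
  | cons a u₁ ih =>
    cases h with
    | head => exact .inl ⟨_, .head u₁, by simp⟩
    | cons _ h =>
      rcases ih h with ⟨v₁, h₁, rfl⟩ | ⟨v₂, h₂, rfl⟩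
      · exact .inl ⟨a :: v₁, h₁.cons a, rfl⟩
      · exact .inr ⟨v₂, h₂, rfl⟩

end ContextFreeRule

namespace ContextFreeGrammar

variable {T : Type*} {g : ContextFreeGrammar T}

lemma Produces.exists_of_append {u₁ u₂ v : List (Symbol T g.NT)} (h : g.Produces (u₁ ++ u₂) v) :
    (∃ v₁, g.Produces u₁ v₁ ∧ v = v₁ ++ u₂) ∨ (∃ v₂, g.Produces u₂ v₂ ∧ v = u₁ ++ v₂) := by
  obtain ⟨r, hr, hrw⟩ := h
  rcases hrw.exists_of_append with ⟨v₁, h₁, rfl⟩ | ⟨v₂, h₂, rfl⟩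
  · exact .inl ⟨v₁, ⟨r, hr, h₁⟩, rfl⟩
  · exact .inr ⟨v₂, ⟨r, hr, h₂⟩, rfl⟩

lemma not_produces_map_terminal (w : List T) (v : List (Symbol T g.NT)) :
    ¬ g.Produces (w.map Symbol.terminal) v := by
  rintro ⟨r, -, hr⟩
  simpa using hr.nonterminal_input_mem

lemma Produces.exists_rule {A : g.NT} {v : List (Symbol T g.NT)}
    (h : g.Produces [Symbol.nonterminal A] v) : ∃ r ∈ g.rules, r.input = A ∧ v = r.output := by
  obtain ⟨r, hr, hrw⟩ := h
  cases hrw with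
  | head => exact ⟨r, hr, rfl, append_nil _⟩
  | cons _ h => cases h

inductive DerivesIn (g : ContextFreeGrammar T) :
    List (Symbol T g.NT) → List (Symbol T g.NT) → ℕ → Prop
  | refl (u : List (Symbol T g.NT)) : g.DerivesIn u u 0
  | head {u v w : List (Symbol T g.NT)} {n : ℕ} :
      g.Produces u v → g.DerivesIn v w n → g.DerivesIn u w (n + 1)

lemma DerivesIn.derives {u v : List (Symbol T g.NT)} {n : ℕ} (h : g.DerivesIn u v n) :
    g.Derives u v := by
  induction h with
  | refl => rfl
  | head hp _ ih => exact hp.trans_derives ih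

lemma Derives.exists_derivesIn {u v : List (Symbol T g.NT)} (h : g.Derives u v) :
    ∃ n, g.DerivesIn u v n := by
  induction h using Relation.ReflTransGen.head_induction_on with
  | refl => exact ⟨0, .refl _⟩
  | head hp _ ih =>
    obtain ⟨n, hn⟩ := ih
    exact ⟨n + 1, .head hp hn⟩

lemma DerivesIn.exists_of_append {u₁ u₂ v : List (Symbol T g.NT)} {n : ℕ}
    (h : g.DerivesIn (u₁ ++ u₂) v n) :
    ∃ v₁ v₂ n₁ n₂, v = v₁ ++ v₂ ∧ g.DerivesIn u₁ v₁ n₁ ∧ g.DerivesIn u₂ v₂ n₂ ∧ n = n₁ + n₂ := by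
  generalize hu : u₁ ++ u₂ = u at h
  induction h generalizing u₁ u₂ with
  | refl => exact ⟨u₁, u₂, 0, 0, hu.symm, .refl _, .refl _, rfl⟩
  | head hp _ ih =>
    subst hu
    rcases hp.exists_of_append with ⟨w₁, hw₁, rfl⟩ | ⟨w₂, hw₂, rfl⟩
    · obtain ⟨v₁, v₂, n₁, n₂, rfl, h₁, h₂, rfl⟩ := ih rfl
      exact ⟨v₁, v₂, n₁ + 1, n₂, rfl, .head hw₁ h₁, h₂, by omega⟩
    · obtain ⟨v₁, v₂, n₁, n₂, rfl, h₁, h₂, rfl⟩ := ih rfl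
      exact ⟨v₁, v₂, n₁, n₂ + 1, rfl, h₁, .head hw₂ h₂, by omega⟩

lemma DerivesIn.exists_of_append_map_terminal {u₁ u₂ : List (Symbol T g.NT)} {w : List T}
    {n : ℕ} (h : g.DerivesIn (u₁ ++ u₂) (w.map Symbol.terminal) n) :
    ∃ w₁ w₂ n₁ n₂, w = w₁ ++ w₂ ∧ g.DerivesIn u₁ (w₁.map Symbol.terminal) n₁ ∧
      g.DerivesIn u₂ (w₂.map Symbol.terminal) n₂ ∧ n = n₁ + n₂ := by
  obtain ⟨v₁, v₂, n₁, n₂, hv, h₁, h₂, rfl⟩ := h.exists_of_append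
  obtain ⟨w₁, w₂, rfl, rfl, rfl⟩ := List.map_eq_append_iff.mp hv
  exact ⟨w₁, w₂, n₁, n₂, rfl, h₁, h₂, rfl⟩

lemma DerivesIn.eq_of_map_terminal {u w : List T} {n : ℕ}
    (h : g.DerivesIn (u.map Symbol.terminal) (w.map Symbol.terminal) n) : w = u := by
  generalize hu : u.map Symbol.terminal = u' at h
  cases h with
  | refl => exact List.map_injective_iff.mpr (fun _ _ => Symbol.terminal.inj) hu.symm
  | head hp _ => exact absurd (hu ▸ hp) (not_produces_map_terminal u _)

lemma DerivesIn.exists_rule {A : g.NT} {w : List T} {n : ℕ}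
    (h : g.DerivesIn [Symbol.nonterminal A] (w.map Symbol.terminal) n) :
    ∃ r ∈ g.rules, r.input = A ∧
      ∃ m, n = m + 1 ∧ g.DerivesIn r.output (w.map Symbol.terminal) m := by
  generalize hw : w.map Symbol.terminal = v at h
  cases h with
  | refl => simp at hw
  | head hp hd =>
    obtain ⟨r, hr, rfl, rfl⟩ := hp.exists_rule
    exact ⟨r, hr, rfl, _, rfl, hw ▸ hd⟩

lemma DerivesIn.exists_shortest_rule {A : g.NT} {w : List T} {k : ℕ}
    (hd : g.DerivesIn [Symbol.nonterminal A] (w.map Symbol.terminal) k) :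
    ∃ r ∈ g.rules, r.input = A ∧ ∃ m < k, g.DerivesIn r.output (w.map Symbol.terminal) m ∧
      ∀ k', g.DerivesIn [Symbol.nonterminal A] (w.map Symbol.terminal) k' → m < k' := by
  classical
  have hex : ∃ k, g.DerivesIn [Symbol.nonterminal A] (w.map Symbol.terminal) k := ⟨k, hd⟩
  obtain ⟨r, hr, hrA, m, hm, hdr⟩ := (Nat.find_spec hex).exists_rule
  refine ⟨r, hr, hrA, m, ?_, hdr, fun k' hk' => ?_⟩
  · have := Nat.find_min' hex hd
    omega
  · have := Nat.find_min' hex hk'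
    omega

end ContextFreeGrammar

section LZLike

variable {α : Type*}

def IsLZLike : List α → List (List α) → Prop
  | _, [] => True
  | x, q :: Q => (q.length ≤ 1 ∨ q <:+: x) ∧ IsLZLike (x ++ q) Q

lemma isLZLike_append {x : List α} {Q₁ Q₂ : List (List α)} :
    IsLZLike x (Q₁ ++ Q₂) ↔ IsLZLike x Q₁ ∧ IsLZLike (x ++ Q₁.flatten) Q₂ := by
  induction Q₁ generalizing x with
  | nil => simp [IsLZLike]
  | cons q Q₁ ih => simp [IsLZLike, ih, and_assoc]

lemma List.take_length_flatten_take (L : List (List α)) (k : ℕ) :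
    L.flatten.take (L.take k).flatten.length = (L.take k).flatten := by
  simpa [length_flatten, map_take] using take_sum_flatten L k

lemma List.drop_length_flatten_take (L : List (List α)) (k : ℕ) :
    L.flatten.drop (L.take k).flatten.length = (L.drop k).flatten := by
  simpa [length_flatten, map_take] using drop_sum_flatten L k

lemma List.length_flatten_take_succ {L : List (List α)} {k : ℕ} (hk : k < L.length) :
    (L.take (k + 1)).flatten.length = (L.take k).flatten.length + L[k].length := by
  rw [take_add_one, getElem?_eq_getElem hk, flatten_append, length_append]
  simp only [Option.toList_some, flatten_cons, flatten_nil, append_nil]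

end LZLike

namespace IsLZ77Parse

variable {α : Type} {s : List α} {P : List (List α)}

/-- Greedy maximality: a factor starting at `j`, no later than phrase `k` (which starts at
`(P.take k).flatten.length`), and occurring before `j` ends no later than phrase `k`. -/
lemma add_length_le (hP : IsLZ77Parse s P) {k : ℕ} (hk : k < P.length) {j : ℕ}
    (hj : j ≤ (P.take k).flatten.length) {q : List α} (hq : q <+: s.drop j)
    (hocc : q.length ≤ 1 ∨ q <:+: s.take j) :
    j + q.length ≤ (P.take (k + 1)).flatten.length := by
  obtain ⟨hflat, hne, hmax⟩ := hP
  rw [List.length_flatten_take_succ hk]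
  set b := (P.take k).flatten.length
  have hPk : 1 ≤ P[k].length := length_pos_iff.mpr (hne _ (getElem_mem hk))
  by_cases hle : j + q.length ≤ b
  · omega
  set r := q.drop (b - j) with hr
  have hpre : r <+: (P.drop k).flatten := by
    rw [← List.drop_length_flatten_take, hflat,
      show (P.take k).flatten.length = j + (b - j) by omega, ← drop_drop]
    exact hq.drop (b - j)
  have hlen : r.length ≤ max P[k].length 1 := by
    rcases hocc with h | h
    · simp only [hr, length_drop]
      omega
    · have hinf : r <:+: (P.take k).flatten := by
        rw [← List.take_length_flatten_take, hflat]
        exact (drop_suffix _ q).isInfix.trans (h.trans (take_prefix_take_left hj).isInfix)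
      simpa using (hmax ⟨k, hk⟩).2 r hpre hinf
  simp only [hr, length_drop] at hlen
  omega

lemma length_flatten_take_lt (hP : IsLZ77Parse s P) {k : ℕ} (hk : k < P.length) :
    (P.take k).flatten.length < s.length := by
  have hPk : 0 < P[k].length := length_pos_iff.mpr (hP.2.1 _ (getElem_mem hk))
  have hle : (P.take (k + 1)).flatten.length ≤ s.length := by
    rw [← hP.1, ← List.take_length_flatten_take]
    exact (take_prefix _ _).length_le
  rw [List.length_flatten_take_succ hk] at hle
  omega

lemma length_le_add_of_isLZLike (hP : IsLZ77Parse s P) (Q : List (List α)) {j k : ℕ}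
    (hk : k ≤ P.length) (hj : j ≤ (P.take k).flatten.length) (hQ : IsLZLike (s.take j) Q)
    (hflat : Q.flatten = s.drop j) : P.length ≤ k + Q.length := by
  induction Q generalizing j k with
  | nil =>
    by_contra hlt
    have := hP.length_flatten_take_lt (k := k) (by simp at hlt; omega)
    simp only [flatten_nil, eq_comm, drop_eq_nil_iff] at hflat
    omega
  | cons q Q ih =>
    obtain ⟨hocc, hQ⟩ := hQ
    rcases hk.lt_or_eq with hk | rfl
    · have hsplit : q ++ Q.flatten = s.drop j := hflat
      have hreach := hP.add_length_le hk hj ⟨_, hsplit⟩ hocc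
      have hQ' : IsLZLike (s.take (j + q.length)) Q := by
        rwa [take_add, ← hsplit, take_left' rfl]
      have hflat' : Q.flatten = s.drop (j + q.length) := by
        rw [← drop_drop, ← hsplit, drop_left' rfl]
      have := ih (Nat.succ_le_of_lt hk) hreach hQ' hflat'
      simp only [length_cons]
      omega
    · simp

theorem length_le_of_isLZLike (hP : IsLZ77Parse s P) {Q : List (List α)}
    (hQ : IsLZLike [] Q) (hflat : Q.flatten = s) : P.length ≤ Q.length := by
  simpa using hP.length_le_add_of_isLZLike Q (j := 0) (k := 0) (Nat.zero_le _) (Nat.zero_le _)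
    (by simpa using hQ) (by simpa using hflat)

end IsLZ77Parse

def rhsSize {T N : Type*} (R : Finset (ContextFreeRule T N)) : ℕ :=
  ∑ r ∈ R, r.output.length

namespace ContextFreeGrammar

variable {T : Type*} {g : ContextFreeGrammar T}

def AppearsBetween (g : ContextFreeGrammar T) (x : List T) (β : List (Symbol T g.NT))
    (z : List T) : Prop :=
  g.Derives [Symbol.nonterminal g.initial]
    (x.map Symbol.terminal ++ β ++ z.map Symbol.terminal)

namespace AppearsBetween

variable {x z : List T} {β γ : List (Symbol T g.NT)}

lemma produces (h : g.AppearsBetween x β z) (hp : g.Produces β γ) :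
    g.AppearsBetween x γ z :=
  h.trans_produces ((hp.append_left _).append_right _)

lemma append_left_derives (h : g.AppearsBetween x (β ++ γ) z) {u : List T}
    (hβ : g.Derives β (u.map Symbol.terminal)) : g.AppearsBetween (x ++ u) γ z := by
  have := h.trans ((hβ.append_right γ).append_left _ |>.append_right _)
  simpa [AppearsBetween, append_assoc] using this

lemma append_right_derives (h : g.AppearsBetween x (β ++ γ) z) {v : List T}
    (hγ : g.Derives γ (v.map Symbol.terminal)) : g.AppearsBetween x β (v ++ z) := by
  have := h.trans ((hγ.append_left β).append_left _ |>.append_right _)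
  simpa [AppearsBetween, append_assoc] using this

lemma eq_of_derives {s : List T} (hG : g.language = {s}) (h : g.AppearsBetween x β z)
    {w : List T} (hw : g.Derives β (w.map Symbol.terminal)) : x ++ w ++ z = s := by
  have hmem : x ++ w ++ z ∈ g.language := by
    have := h.trans ((hw.append_left _).append_right _)
    simpa [AppearsBetween, append_assoc] using this
  rwa [hG] at hmem

lemma derives_unique {s : List T} (hG : g.language = {s}) (h : g.AppearsBetween x β z)
    {w₁ w₂ : List T} (h₁ : g.Derives β (w₁.map Symbol.terminal))
    (h₂ : g.Derives β (w₂.map Symbol.terminal)) : w₁ = w₂ := by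
  simpa using (h.eq_of_derives hG h₁).trans (h.eq_of_derives hG h₂).symm

end AppearsBetween

def RulesExpandedIn (g : ContextFreeGrammar T) (x : List T)
    (S : Finset (ContextFreeRule T g.NT)) : Prop :=
  ∀ r ∈ S, r ∈ g.rules ∧
    ∃ y, g.Derives [Symbol.nonterminal r.input] (y.map Symbol.terminal) ∧ y <:+: x

lemma RulesExpandedIn.append_right {x : List T} {S : Finset (ContextFreeRule T g.NT)}
    (h : g.RulesExpandedIn x S) (t : List T) : g.RulesExpandedIn (x ++ t) S := fun r hr =>
  let ⟨hr, y, hy, hyx⟩ := h r hr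
  ⟨hr, y, hy, hyx.trans (prefix_append x t).isInfix⟩

lemma RulesExpandedIn.cons {x y : List T} {S : Finset (ContextFreeRule T g.NT)}
    {r : ContextFreeRule T g.NT} (h : g.RulesExpandedIn x S) (hrS : r ∉ S) (hr : r ∈ g.rules)
    (hy : g.Derives [Symbol.nonterminal r.input] (y.map Symbol.terminal)) (hyx : y <:+: x) :
    g.RulesExpandedIn x (S.cons r hrS) := by
  intro r' hr'
  rcases Finset.mem_cons.mp hr' with rfl | hr'
  · exact ⟨hr, y, hy, hyx⟩
  · exact h r' hr'

def DerivesTerminalWithin (g : ContextFreeGrammar T) (n : ℕ) (A : g.NT) : Prop :=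
  ∃ (w : List T) (k : ℕ), k ≤ n ∧ g.DerivesIn [Symbol.nonterminal A] (w.map Symbol.terminal) k

lemma DerivesTerminalWithin.mono {m n : ℕ} {A : g.NT} (h : g.DerivesTerminalWithin m A)
    (hmn : m ≤ n) : g.DerivesTerminalWithin n A :=
  let ⟨w, k, hk, hd⟩ := h
  ⟨w, k, hk.trans hmn, hd⟩

/-- The invariant of the left-to-right traversal of a derivation of `x ++ w ++ z`: `Q` factors
the part `w`, the rules of `S' \ S` are those expanded for the first time while doing so, and
each phrase is paid for by one of `c` coins or by a right-hand-side symbol of such a rule. -/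
structure IsPaidFactorization (g : ContextFreeGrammar T) (n c : ℕ) (x w : List T)
    (S S' : Finset (ContextFreeRule T g.NT)) (Q : List (List T)) : Prop where
  flatten_eq : Q.flatten = w
  subset : S ⊆ S'
  rulesExpandedIn : g.RulesExpandedIn (x ++ w) S'
  derivesTerminalWithin : ∀ r ∈ S', r ∉ S → g.DerivesTerminalWithin n r.input
  isLZLike : IsLZLike x Q
  length_add_le : Q.length + rhsSize S ≤ c + rhsSize S'

lemma IsPaidFactorization.append {n c₁ c₂ : ℕ} {x w₁ w₂ : List T}
    {S S₁ S₂ : Finset (ContextFreeRule T g.NT)} {Q₁ Q₂ : List (List T)}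
    (h₁ : g.IsPaidFactorization n c₁ x w₁ S S₁ Q₁)
    (h₂ : g.IsPaidFactorization n c₂ (x ++ w₁) w₂ S₁ S₂ Q₂) :
    g.IsPaidFactorization n (c₁ + c₂) x (w₁ ++ w₂) S S₂ (Q₁ ++ Q₂) where
  flatten_eq := by simp [h₁.flatten_eq, h₂.flatten_eq]
  subset := h₁.subset.trans h₂.subset
  rulesExpandedIn := by simpa [append_assoc] using h₂.rulesExpandedIn
  derivesTerminalWithin r hr hrS := by
    by_cases hrS₁ : r ∈ S₁
    · exact h₁.derivesTerminalWithin r hrS₁ hrS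
    · exact h₂.derivesTerminalWithin r hr hrS₁
  isLZLike := isLZLike_append.mpr ⟨h₁.isLZLike, h₁.flatten_eq ▸ h₂.isLZLike⟩
  length_add_le := by
    have := h₁.length_add_le
    have := h₂.length_add_le
    simp only [length_append]
    omega

lemma isPaidFactorization_singleton {n : ℕ} {x w : List T}
    {S : Finset (ContextFreeRule T g.NT)} (hS : g.RulesExpandedIn (x ++ w) S)
    (hw : w.length ≤ 1 ∨ w <:+: x) : g.IsPaidFactorization n 1 x w S S [w] :=
  ⟨by simp, subset_rfl, hS, fun _ hr hrS => (hrS hr).elim, ⟨hw, trivial⟩, by simp⟩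

def CanFactor (g : ContextFreeGrammar T) (n : ℕ) (β : List (Symbol T g.NT)) : Prop :=
  ∀ ⦃w x z : List T⦄ ⦃S : Finset (ContextFreeRule T g.NT)⦄ ⦃k : ℕ⦄, k ≤ n →
    g.DerivesIn β (w.map Symbol.terminal) k → g.AppearsBetween x β z → g.RulesExpandedIn x S →
    ∃ Q S', g.IsPaidFactorization n β.length x w S S' Q

lemma canFactor_nil (n : ℕ) : g.CanFactor n [] := by
  intro w x z S k _ hd _ hS
  obtain rfl := hd.eq_of_map_terminal (u := [])
  exact ⟨[], S, rfl, subset_rfl, by simpa using hS, fun _ hr hrS => (hrS hr).elim, trivial,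
    by simp⟩

lemma CanFactor.append {n : ℕ} {β γ : List (Symbol T g.NT)} (hβ : g.CanFactor n β)
    (hγ : g.CanFactor n γ) : g.CanFactor n (β ++ γ) := by
  intro w x z S k hk hd hctx hS
  obtain ⟨w₁, w₂, k₁, k₂, rfl, h₁, h₂, rfl⟩ := hd.exists_of_append_map_terminal
  obtain ⟨Q₁, S₁, hQ₁⟩ := hβ (by omega) h₁ (hctx.append_right_derives h₂.derives) hS
  obtain ⟨Q₂, S₂, hQ₂⟩ :=
    hγ (by omega) h₂ (hctx.append_left_derives h₁.derives) hQ₁.rulesExpandedIn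
  exact ⟨Q₁ ++ Q₂, S₂, length_append ▸ hQ₁.append hQ₂⟩

lemma canFactor_terminal (n : ℕ) (a : T) : g.CanFactor n [Symbol.terminal a] := by
  intro w x z S k _ hd _ hS
  obtain rfl := hd.eq_of_map_terminal (u := [a])
  exact ⟨[[a]], S, isPaidFactorization_singleton (hS.append_right _) (.inl (by simp))⟩

lemma isPaidFactorization_of_mem {s : List T} (hG : g.language = {s}) {n : ℕ} {x w z : List T}
    {S : Finset (ContextFreeRule T g.NT)} {r : ContextFreeRule T g.NT} (hr : r ∈ S)
    (hd : g.Derives [Symbol.nonterminal r.input] (w.map Symbol.terminal))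
    (hctx : g.AppearsBetween x [Symbol.nonterminal r.input] z) (hS : g.RulesExpandedIn x S) :
    g.IsPaidFactorization n 1 x w S S [w] := by
  obtain ⟨-, y, hy, hyx⟩ := hS r hr
  obtain rfl := hctx.derives_unique hG hd hy
  exact isPaidFactorization_singleton (hS.append_right _) (.inr hyx)

/-- Expanding a nonterminal by the first rule of a shortest derivation: that rule cannot be
expanded again below it, since otherwise the nonterminal would have a shorter derivation. -/
lemma exists_isPaidFactorization_of_forall_input_ne {s : List T} (hG : g.language = {s}) {n : ℕ}
    (ih : ∀ m < n, ∀ β, g.CanFactor m β) {x w z : List T} {S : Finset (ContextFreeRule T g.NT)}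
    {B : g.NT} (hB : ∀ r ∈ S, r.input ≠ B) {k : ℕ} (hk : k ≤ n)
    (hd : g.DerivesIn [Symbol.nonterminal B] (w.map Symbol.terminal) k)
    (hctx : g.AppearsBetween x [Symbol.nonterminal B] z) (hS : g.RulesExpandedIn x S) :
    ∃ Q S', g.IsPaidFactorization n 0 x w S S' Q := by
  obtain ⟨r, hr, rfl, m, hmk, hdr, hshortest⟩ := hd.exists_shortest_rule
  obtain ⟨Q, S₁, hQ⟩ :=
    ih m (by omega) r.output le_rfl hdr (hctx.produces ⟨r, hr, .input_output⟩) hS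
  have hrS₁ : r ∉ S₁ := fun hrS₁ => by
    obtain ⟨w', k', hk', h'⟩ := hQ.derivesTerminalWithin r hrS₁ (fun hrS => hB r hrS rfl)
    obtain rfl := hctx.derives_unique hG h'.derives hd.derives
    exact absurd (hshortest k' h') (by omega)
  refine ⟨Q, S₁.cons r hrS₁, hQ.flatten_eq, hQ.subset.trans (Finset.subset_cons _),
    hQ.rulesExpandedIn.cons hrS₁ hr hd.derives (suffix_append x w).isInfix, ?_, hQ.isLZLike, ?_⟩
  · intro r' hr' hr'S
    rcases Finset.mem_cons.mp hr' with rfl | hr'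
    · exact ⟨w, k, hk, hd⟩
    · exact (hQ.derivesTerminalWithin r' hr' hr'S).mono (by omega)
  · have := hQ.length_add_le
    simp only [rhsSize, Finset.sum_cons] at this ⊢
    omega

lemma canFactor_nonterminal {s : List T} (hG : g.language = {s}) {n : ℕ}
    (ih : ∀ m < n, ∀ β, g.CanFactor m β) (B : g.NT) : g.CanFactor n [Symbol.nonterminal B] := by
  intro w x z S k hk hd hctx hS
  by_cases hrep : ∃ r ∈ S, r.input = B
  · obtain ⟨r, hr, rfl⟩ := hrep
    exact ⟨[w], S, isPaidFactorization_of_mem hG hr hd.derives hctx hS⟩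
  · push Not at hrep
    obtain ⟨Q, S', hQ⟩ := exists_isPaidFactorization_of_forall_input_ne hG ih hrep hk hd hctx hS
    exact ⟨Q, S', { hQ with
      length_add_le := by have := hQ.length_add_le; simp only [length_singleton]; omega }⟩

theorem canFactor {s : List T} (hG : g.language = {s}) (n : ℕ) (β : List (Symbol T g.NT)) :
    g.CanFactor n β := by
  induction n using Nat.strong_induction_on generalizing β with
  | _ n ih =>
  induction β with
  | nil => exact canFactor_nil n
  | cons σ β hβ =>
    have hσ : g.CanFactor n [σ] := by
      cases σ with
      | terminal a => exact canFactor_terminal n a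
      | nonterminal B => exact canFactor_nonterminal hG ih B
    exact hσ.append hβ

end ContextFreeGrammar

theorem lz77_phrases_le_smallest_grammar_general {α : Type} (s : List α)
    (P : List (List α)) (hP : IsLZ77Parse s P)
    (G : ContextFreeGrammar α) (hG : G.language = {s}) :
    P.length ≤ grammarSize G := by
  have hs : s ∈ G.language := hG ▸ rfl
  obtain ⟨k, hk⟩ := ((G.mem_language_iff s).mp hs).exists_derivesIn
  obtain ⟨Q, S, hQ⟩ := G.exists_isPaidFactorization_of_forall_input_ne hG
    (fun m _ => G.canFactor hG m) (S := ∅) (x := []) (z := []) (by simp) le_rfl hk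
    (.refl _) (by simp [ContextFreeGrammar.RulesExpandedIn])
  calc P.length ≤ Q.length := hP.length_le_of_isLZLike hQ.isLZLike hQ.flatten_eq
    _ ≤ rhsSize S := by simpa [rhsSize] using hQ.length_add_le
    _ ≤ grammarSize G := Finset.sum_le_sum_of_subset fun r hr => (hQ.rulesExpandedIn r hr).1

/-- The number of phrases of the LZ77 parse is a lower bound on the size of any
context-free grammar generating `s` and only `s`. -/
theorem lz77_phrases_le_smallest_grammar {α : Type} (s : List α) (hn : 1 ≤ s.length)
    (P : List (List α)) (hP : IsLZ77Parse s P)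
    (G : ContextFreeGrammar α) (hG : G.language = {s}) :
    P.length ≤ grammarSize G :=
  lz77_phrases_le_smallest_grammar_general s P hP G hG
end

section
/- The first occurrence of any substring w of s (the occurrence of w in s with the smallest starting position) either touches or crosses a boundary between two consecutive phrases of the LZ77 parse of s, or begins at position 1. Formally: if w occurs in s starting at position p and at no earlier position, then there is an LZ77 phrase boundary b with p ≤ b ≤ p + |w|, or p = 1. -/
open List

/-! If the first occurrence of `w` neither starts the string nor touches an inner phrase
boundary, it lies inside a single phrase, strictly after that phrase's first character.
That phrase then has length at least two, so by the LZ77 property it already occurs in the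
text preceding it, and so does `w`: an earlier occurrence, contradicting minimality. -/

theorem Nat.exists_lt_le_succ_of_notMem_Icc {b : ℕ → ℕ} {n p q : ℕ} (hpq : p ≤ q)
    (h0 : b 0 < p) (hn : q ≤ b n) (hgap : ∀ k, 0 < k → k < n → b k ∉ Set.Icc p q) :
    ∃ i < n, b i < p ∧ q ≤ b (i + 1) := by
  induction n with
  | zero => omega
  | succ n ih =>
    by_cases hbn : b n < p
    · exact ⟨n, n.lt_succ_self, hbn, hn⟩
    have hn0 : 0 < n := Nat.pos_of_ne_zero fun h => hbn (h ▸ h0)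
    have hqbn : q < b n := by
      by_contra! h
      exact hgap n hn0 n.lt_succ_self ⟨not_lt.mp hbn, h⟩
    obtain ⟨i, hi, hbi⟩ := ih hqbn.le fun k hk hkn => hgap k hk (hkn.trans n.lt_succ_self)
    exact ⟨i, hi.trans n.lt_succ_self, hbi⟩

namespace List

variable {α : Type*}

theorem flatten_eq_flatten_take_append_getElem_append (P : List (List α)) {i : ℕ}
    (hi : i < P.length) :
    P.flatten = (P.take i).flatten ++ P[i] ++ (P.drop (i + 1)).flatten := by
  calc P.flatten = (P.take i ++ P.drop i).flatten := by rw [take_append_drop]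
    _ = _ := by rw [drop_eq_getElem_cons hi, flatten_append, flatten_cons, append_assoc]

theorem length_flatten_take_add_one (P : List (List α)) {i : ℕ} (hi : i < P.length) :
    (P.take (i + 1)).flatten.length = (P.take i).flatten.length + P[i].length := by
  rw [take_add_one, getElem?_eq_getElem hi, Option.toList_some, flatten_append, length_append,
    flatten_singleton]

theorem infix_of_append_eq_append_of_length_le {t x r u w v : List α}
    (h : t ++ x ++ r = u ++ w ++ v) (ht : t.length ≤ u.length)
    (hx : u.length + w.length ≤ t.length + x.length) : w <:+: x := by
  obtain ⟨a, rfl⟩ : t <+: u :=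
    prefix_of_prefix_length_le (l₃ := t ++ x ++ r) ⟨x ++ r, (append_assoc ..).symm⟩
      ⟨w ++ v, by rw [h, append_assoc]⟩ ht
  have hxr : x ++ r = a ++ w ++ v := by simpa using h
  have haw : a ++ w <+: x :=
    prefix_of_prefix_length_le ⟨v, hxr.symm⟩ (prefix_append x r) (by simp only [length_append] at hx ⊢; omega)
  exact (suffix_append a w).isInfix.trans haw.isInfix

theorem exists_eq_append_append_of_infix_of_prefix {w t s : List α} (hw : w <:+: t)
    (ht : t <+: s) : ∃ u v, s = u ++ w ++ v ∧ u.length + w.length ≤ t.length := by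
  obtain ⟨x, y, rfl⟩ := hw
  obtain ⟨r, rfl⟩ := ht
  exact ⟨x, y ++ r, by simp, by simp⟩

end List

theorem IsLZ77Parse.getElem_infix_flatten_take {α : Type} {s : List α} {P : List (List α)}
    (hP : IsLZ77Parse s P) {i : ℕ} (hi : i < P.length) (hlong : 1 < P[i].length) :
    P[i] <:+: (P.take i).flatten :=
  (hP.2.2 ⟨i, hi⟩).1.resolve_left (by simp only [get_eq_getElem]; omega)

theorem lz77_first_occurrence_touches_boundary_general {α : Type} (s : List α)
    (P : List (List α)) (hP : IsLZ77Parse s P)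
    (w u v : List α) (hocc : s = u ++ w ++ v)
    (hfirst : ∀ u' v' : List α, s = u' ++ w ++ v' → u.length ≤ u'.length) :
    u = [] ∨ ∃ k : ℕ, 1 ≤ k ∧ k < P.length ∧
      u.length ≤ (P.take k).flatten.length ∧
      (P.take k).flatten.length ≤ u.length + w.length := by
  rcases eq_or_ne w [] with rfl | hw
  · exact Or.inl (length_eq_zero_iff.mp (Nat.le_zero.mp (hfirst [] s (by simp))))
  rcases eq_or_ne u [] with hu | hu
  · exact Or.inl hu
  right
  by_contra! hnone
  obtain ⟨i, hi, hbi, hbi'⟩ := Nat.exists_lt_le_succ_of_notMem_Icc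
    (b := fun k => (P.take k).flatten.length) (n := P.length) (Nat.le_add_right _ _)
    (by simpa using length_pos_iff.2 hu) (by simp [hP.1, hocc])
    fun k hk hkn hmem => (hnone k hk hkn hmem.1).not_ge hmem.2
  simp only [length_flatten_take_add_one P hi] at hbi'
  have hsplit : s = (P.take i).flatten ++ P[i] ++ (P.drop (i + 1)).flatten :=
    hP.1 ▸ flatten_eq_flatten_take_append_getElem_append P hi
  have hwP : w <:+: P[i] :=
    infix_of_append_eq_append_of_length_le (hsplit.symm.trans hocc) hbi.le hbi'
  have hlong : 1 < P[i].length := by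
    have := length_pos_iff.2 hw
    omega
  have hprefix : (P.take i).flatten <+: s := ⟨_, by rw [hsplit, append_assoc]⟩
  obtain ⟨u', v', hs, hlen⟩ := exists_eq_append_append_of_infix_of_prefix
    (hwP.trans (hP.getElem_infix_flatten_take hi hlong)) hprefix
  have := hfirst u' v' hs
  omega

/-- The first occurrence of any nonempty substring `w` of `s` touches or crosses a
boundary between two consecutive phrases of the LZ77 parse of `s`, or begins at the
very start of `s`.  Positions are counted by the length of the material to the left,
so the occurrence `s = u ++ w ++ v` spans `[u.length, u.length + w.length]` and the
boundary after the `k`-th phrase sits at `(P.take k).flatten.length`. -/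
theorem lz77_first_occurrence_touches_boundary {α : Type} (s : List α)
    (P : List (List α)) (hP : IsLZ77Parse s P)
    (w u v : List α) (hw : w ≠ []) (hocc : s = u ++ w ++ v)
    (hfirst : ∀ u' v' : List α, s = u' ++ w ++ v' → u.length ≤ u'.length) :
    u = [] ∨ ∃ k : ℕ, 1 ≤ k ∧ k < P.length ∧
      u.length ≤ (P.take k).flatten.length ∧
      (P.take k).flatten.length ≤ u.length + w.length :=
  lz77_first_occurrence_touches_boundary_general s P hP w u v hocc hfirst
end

section
/- Given a factorization of a string s into z phrases where each phrase of length > 1 equals some substring of the preceding prefix, the refinement procedure that repeatedly inserts breaks so that every phrase's matching source substring begins at a phrase start and ends at a phrase end produces a factorization with at most z² phrases. -/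
open List

/-- The set of phrase boundaries of a factorization, measured as the number of
characters to the left of the boundary. -/
def boundaries {α : Type} (P : List (List α)) : Set ℕ :=
  { b | ∃ k ≤ P.length, b = (P.take k).flatten.length }

/-- Phrase `i` of `Q` is the concatenation of the complete consecutive preceding
phrases `j, j+1, …, k-1` of `Q`. -/
def IsConcatOfPrecedingPhrases {α : Type} (Q : List (List α)) (i : Fin Q.length) : Prop :=
  ∃ j k : ℕ, j < k ∧ k ≤ i.1 ∧ Q.get i = ((Q.drop j).take (k - j)).flatten

/-!
Positions of `s` are the numbers `0, …, |s|`. The map `copyMap` sends a position strictly inside a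
phrase of length at least two to the matching position of its source and fixes all other
positions. The image lies in an earlier phrase, so `i` steps starting left of phrase `i` reach a
phrase boundary. Hence the phrase boundaries together with the first `i` points of the
`copyMap`-orbits of the two ends of the source of phrase `i` form a set of at most
`(z + 1) + ∑_{i < z} 2 i = z² + 1` cuts that is closed under `copyMap`. Cutting `s` there gives
at most `z²` phrases, and a phrase of length at least two lies inside one original phrase, so
shifting it into that phrase's source yields an earlier occurrence that starts and ends at cuts.
-/

namespace List

variable {α : Type*}

theorem extract_append_extract (s : List α) {a b c : ℕ} (hab : a ≤ b) (hbc : b ≤ c) :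
    s.extract a b ++ s.extract b c = s.extract a c := by
  simp only [extract_eq_take_drop]
  rw [show c - a = (b - a) + (c - b) by omega, take_add, drop_drop, Nat.add_sub_cancel' hab]

theorem extract_extract (s : List α) {a c d e : ℕ} (hde : d ≤ e) (hec : a + e ≤ c) :
    (s.extract a c).extract d e = s.extract (a + d) (a + e) := by
  simp only [extract_eq_take_drop, drop_take, drop_drop, take_take]
  congr 1
  omega

theorem exists_extract_eq_of_isInfix_of_isPrefix {w p s : List α} (hw : w <:+: p) (hp : p <+: s) :
    ∃ v, v + w.length ≤ p.length ∧ s.extract v (v + w.length) = w := by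
  obtain ⟨t, r, rfl⟩ := hw
  obtain ⟨q, rfl⟩ := hp
  exact ⟨t.length, by simp, by simp⟩

end List

namespace LZ77Refinement

section Orbit

variable {β : Type*} [DecidableEq β] (f : β → β)

def orbitPrefix (w : β) (k : ℕ) : Finset β := (Finset.range k).image fun m => f^[m] w

theorem card_orbitPrefix_le (w : β) (k : ℕ) : (orbitPrefix f w k).card ≤ k :=
  Finset.card_image_le.trans (Finset.card_range k).le

theorem self_mem_orbitPrefix (w : β) {k : ℕ} (hk : 0 < k) : w ∈ orbitPrefix f w k :=
  Finset.mem_image.mpr ⟨0, Finset.mem_range.mpr hk, rfl⟩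

theorem apply_mem_orbitPrefix {w x : β} {k : ℕ} (hx : x ∈ orbitPrefix f w k) :
    f x ∈ orbitPrefix f w k ∨ f x = f^[k] w := by
  obtain ⟨m, hm, rfl⟩ := Finset.mem_image.mp hx
  rw [← Function.iterate_succ_apply' f m w]
  rcases (Nat.succ_le_of_lt (Finset.mem_range.mp hm)).lt_or_eq with h | h
  · exact Or.inl (Finset.mem_image.mpr ⟨m + 1, Finset.mem_range.mpr h, rfl⟩)
  · exact Or.inr (by rw [h])

end Orbit

section Cuts

variable {α : Type}

def cutFactorization (s : List α) (L : List ℕ) : List (List α) :=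
  zipWith (fun a b => s.extract a b) L L.tail

variable (s : List α) {L : List ℕ}

theorem length_cutFactorization (L : List ℕ) :
    (cutFactorization s L).length = L.length - 1 := by
  simp [cutFactorization]

theorem getElem_cutFactorization {j : ℕ} (hj : j < (cutFactorization s L).length) :
    (cutFactorization s L)[j] =
      s.extract (L[j]'(by grind [length_cutFactorization]))
        (L[j + 1]'(by grind [length_cutFactorization])) := by
  simp [cutFactorization]

theorem flatten_take_drop_cutFactorization (hL : L.SortedLT) {j d : ℕ} (h : j + d < L.length) :
    (((cutFactorization s L).drop j).take d).flatten = s.extract L[j] L[j + d] := by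
  induction d with
  | zero => simp
  | succ d ih =>
    have hQ : j + d < (cutFactorization s L).length := by
      rw [length_cutFactorization]; omega
    rw [take_add_one, getElem?_drop, getElem?_eq_getElem hQ, flatten_append, ih (by omega),
      Option.toList_some, flatten_singleton, getElem_cutFactorization, extract_append_extract]
    · rfl
    · simp [hL.getElem_le_getElem_iff]
    · simp [hL.getElem_le_getElem_iff]

theorem isConcatOfPrecedingPhrases_cutFactorization (hL : L.SortedLT)
    (i : Fin (cutFactorization s L).length) {j k : ℕ} (hjk : j < k) (hk : k < L.length)
    (hki : L[k] ≤ L[i.1]'(by grind [length_cutFactorization]))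
    (h : (cutFactorization s L).get i = s.extract (L[j]'(by omega)) L[k]) :
    IsConcatOfPrecedingPhrases (cutFactorization s L) i := by
  refine ⟨j, k, hjk, (hL.getElem_le_getElem_iff).mp hki, ?_⟩
  rw [h, flatten_take_drop_cutFactorization s hL (by omega)]
  simp only [Nat.add_sub_cancel' hjk.le]

theorem flatten_take_cutFactorization (hL : L.SortedLT) (h0 : 0 ∈ L) {k : ℕ}
    (hk : k < L.length) : ((cutFactorization s L).take k).flatten = s.take L[k] := by
  have hL0 : L[0] = 0 := by
    obtain ⟨j, hj, hj0⟩ := getElem_of_mem h0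
    have : L[0] ≤ L[j] := hL.getElem_le_getElem_iff.mpr (Nat.zero_le j)
    omega
  simpa [hL0] using flatten_take_drop_cutFactorization s hL (j := 0) (d := k) (by omega)

theorem flatten_cutFactorization (hL : L.SortedLT) (h0 : 0 ∈ L) (hn : s.length ∈ L)
    (hle : ∀ x ∈ L, x ≤ s.length) : (cutFactorization s L).flatten = s := by
  obtain ⟨j, hj, hjn⟩ := getElem_of_mem hn
  have hlast : L[L.length - 1] = s.length := by
    have : L[j] ≤ L[L.length - 1] := hL.getElem_le_getElem_iff.mpr (by omega)
    have := hle _ (getElem_mem (show L.length - 1 < L.length by omega))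
    omega
  have := flatten_take_cutFactorization s hL h0 (show L.length - 1 < L.length by omega)
  rwa [take_of_length_le (by rw [length_cutFactorization]), hlast, take_length] at this

theorem ne_nil_of_mem_cutFactorization (hL : L.SortedLT) (hle : ∀ x ∈ L, x ≤ s.length)
    {p : List α} (hp : p ∈ cutFactorization s L) : p ≠ [] := by
  obtain ⟨j, hj, rfl⟩ := getElem_of_mem hp
  rw [length_cutFactorization] at hj
  have : L[j] < L[j + 1] := hL.getElem_lt_getElem_iff.mpr (Nat.lt_succ_self j)
  have := hle _ (getElem_mem (show j + 1 < L.length by omega))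
  rw [← length_pos_iff, getElem_cutFactorization, extract_eq_take_drop]
  simp only [length_take, length_drop, lt_inf_iff, tsub_pos_iff_lt]
  omega

theorem getElem_mem_boundaries_cutFactorization (hL : L.SortedLT) (h0 : 0 ∈ L)
    (hle : ∀ x ∈ L, x ≤ s.length) {k : ℕ} (hk : k < L.length) :
    L[k] ∈ boundaries (cutFactorization s L) :=
  ⟨k, by rw [length_cutFactorization]; omega,
    by simp [flatten_take_cutFactorization s hL h0 hk, hle _ (getElem_mem hk)]⟩

theorem exists_factorization_of_cuts (C : Finset ℕ) (h0 : 0 ∈ C) (hn : s.length ∈ C)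
    (hC : ∀ x ∈ C, x ≤ s.length)
    (hgap : ∀ a ∈ C, ∀ b ∈ C, a < b → (∀ c ∈ C, c ≤ a ∨ b ≤ c) →
      b = a + 1 ∨
        ∃ a' ∈ C, ∃ b' ∈ C, a' < b' ∧ b' ≤ a ∧ s.extract a b = s.extract a' b') :
    ∃ Q : List (List α), Q.flatten = s ∧ (∀ p ∈ Q, p ≠ []) ∧ ↑C ⊆ boundaries Q ∧
      (∀ i : Fin Q.length, (Q.get i).length = 1 ∨ IsConcatOfPrecedingPhrases Q i) ∧
      Q.length < C.card := by
  have hL : C.sort.SortedLT := C.sortedLT_sort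
  have hmem : ∀ {x}, x ∈ C.sort ↔ x ∈ C := Finset.mem_sort _
  have hle : ∀ x ∈ C.sort, x ≤ s.length := fun x hx => hC x (hmem.mp hx)
  refine ⟨cutFactorization s C.sort,
    flatten_cutFactorization s hL (hmem.mpr h0) (hmem.mpr hn) hle,
    fun p => ne_nil_of_mem_cutFactorization s hL hle, fun x hx => ?_, fun i => ?_, ?_⟩
  · obtain ⟨k, hk, rfl⟩ := getElem_of_mem (hmem.mpr hx)
    exact getElem_mem_boundaries_cutFactorization s hL (hmem.mpr h0) hle hk
  · have hi : i.1 + 1 < C.sort.length := by grind [length_cutFactorization]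
    have hget : (cutFactorization s C.sort).get i = s.extract C.sort[i.1] C.sort[i.1 + 1] :=
      getElem_cutFactorization s i.2
    have hcons : ∀ c ∈ C, c ≤ C.sort[i.1] ∨ C.sort[i.1 + 1] ≤ c := by
      intro c hc
      obtain ⟨m, hm, rfl⟩ := getElem_of_mem (hmem.mpr hc)
      simp only [hL.getElem_le_getElem_iff]
      omega
    rcases hgap _ (hmem.mp (getElem_mem _)) _ (hmem.mp (getElem_mem hi))
      (hL.getElem_lt_getElem_iff.mpr (Nat.lt_succ_self _)) hcons with
      hone | ⟨a', ha', b', hb', hab', hb'a, heq⟩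
    · left
      have := hle _ (getElem_mem hi)
      rw [hget, extract_eq_take_drop, length_take, length_drop]
      omega
    · right
      obtain ⟨j, hj, rfl⟩ := getElem_of_mem (hmem.mpr ha')
      obtain ⟨k, hk, rfl⟩ := getElem_of_mem (hmem.mpr hb')
      exact isConcatOfPrecedingPhrases_cutFactorization s hL i
        (hL.getElem_lt_getElem_iff.mp hab') hk hb'a (hget.trans heq)
  · rw [length_cutFactorization, Finset.length_sort]
    have := Finset.card_pos.mpr ⟨0, h0⟩
    omega

end Cuts

variable {α : Type} (P : List (List α)) (u : ℕ → ℕ)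

section Phrases

def phraseStart (k : ℕ) : ℕ := (P.take k).flatten.length

def phraseLength (i : ℕ) : ℕ := phraseStart P (i + 1) - phraseStart P i

def boundaryCuts : Finset ℕ := (Finset.range (P.length + 1)).image (phraseStart P)

/-- The index of the phrase containing position `x`; it is `P.length` once
`x ≥ P.flatten.length`. -/
def phraseIndex (x : ℕ) : ℕ := Nat.findGreatest (fun k => phraseStart P k ≤ x) P.length

@[simp] theorem phraseStart_zero : phraseStart P 0 = 0 := by simp [phraseStart]

theorem phraseStart_length : phraseStart P P.length = P.flatten.length := by
  simp [phraseStart]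

theorem phraseStart_le (k : ℕ) : phraseStart P k ≤ P.flatten.length :=
  ((take_prefix k P).flatten).length_le

theorem phraseStart_succ {i : ℕ} (hi : i < P.length) :
    phraseStart P (i + 1) = phraseStart P i + P[i].length := by
  rw [phraseStart, phraseStart, take_add_one, getElem?_eq_getElem hi, flatten_append,
    length_append]
  simp

theorem phraseStart_mono : Monotone (phraseStart P) :=
  monotone_nat_of_le_succ fun k => by
    simp only [phraseStart, take_add_one, flatten_append, length_append]
    omega

theorem phraseLength_eq {i : ℕ} (hi : i < P.length) : phraseLength P i = P[i].length := by
  simp [phraseLength, phraseStart_succ P hi]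

theorem extract_phraseStart {i : ℕ} (hi : i < P.length) :
    P.flatten.extract (phraseStart P i) (phraseStart P (i + 1)) = P[i] := by
  have h : P.flatten = (P.take i).flatten ++ P[i] ++ (P.drop (i + 1)).flatten := by
    rw [append_assoc, ← flatten_cons, ← drop_eq_getElem_cons hi, ← flatten_append,
      take_append_drop]
  rw [phraseStart_succ P hi, phraseStart, h]
  simp

theorem coe_boundaryCuts : (boundaryCuts P : Set ℕ) = boundaries P := by
  ext b
  simp [boundaryCuts, boundaries, eq_comm, phraseStart]

theorem phraseStart_mem_boundaryCuts {k : ℕ} (hk : k ≤ P.length) :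
    phraseStart P k ∈ boundaryCuts P :=
  Finset.mem_image_of_mem _ (Finset.mem_range.mpr (Nat.lt_succ_of_le hk))

theorem zero_mem_boundaryCuts : 0 ∈ boundaryCuts P :=
  phraseStart_zero P ▸ phraseStart_mem_boundaryCuts P (Nat.zero_le _)

theorem length_mem_boundaryCuts : P.flatten.length ∈ boundaryCuts P :=
  phraseStart_length P ▸ phraseStart_mem_boundaryCuts P le_rfl

theorem phraseStart_phraseIndex_le (x : ℕ) : phraseStart P (phraseIndex P x) ≤ x :=
  Nat.findGreatest_spec (P := fun k => phraseStart P k ≤ x) (Nat.zero_le _) (by simp)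

variable {P}

theorem phraseIndex_lt {x : ℕ} (hx : x < P.flatten.length) : phraseIndex P x < P.length := by
  refine lt_of_le_of_ne (Nat.findGreatest_le _) fun h => ?_
  have := phraseStart_phraseIndex_le P x
  rw [h, phraseStart_length] at this
  omega

theorem lt_phraseStart_phraseIndex_succ {x : ℕ} (hx : x < P.flatten.length) :
    x < phraseStart P (phraseIndex P x + 1) :=
  not_le.mp (Nat.findGreatest_is_greatest (P := fun k => phraseStart P k ≤ x)
    (Nat.lt_succ_self _) (phraseIndex_lt hx))

theorem phraseIndex_eq {i x : ℕ} (hi : i < P.length) (hix : phraseStart P i ≤ x)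
    (hxi : x < phraseStart P (i + 1)) : phraseIndex P x = i := by
  have hle : i ≤ phraseIndex P x := Nat.le_findGreatest hi.le hix
  have := phraseStart_mono P (show i + 1 ≤ phraseIndex P x + 1 by omega)
  have := (phraseStart_mono P).reflect_lt
    ((phraseStart_phraseIndex_le P x).trans_lt hxi)
  omega

theorem not_mem_boundaryCuts {i x : ℕ} (hix : phraseStart P i < x)
    (hxi : x < phraseStart P (i + 1)) : x ∉ boundaryCuts P := by
  simp only [boundaryCuts, Finset.mem_image, not_exists, not_and]
  intro k _ hk
  subst hk
  have h1 := (phraseStart_mono P).reflect_lt hix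
  have h2 := (phraseStart_mono P).reflect_lt hxi
  omega

theorem phraseStart_phraseIndex_lt {x : ℕ} (hx : x < P.flatten.length)
    (hxB : x ∉ boundaryCuts P) : phraseStart P (phraseIndex P x) < x :=
  lt_of_le_of_ne (phraseStart_phraseIndex_le P x) fun h =>
    hxB (h ▸ phraseStart_mem_boundaryCuts P (phraseIndex_lt hx).le)

end Phrases

section CopyMap

def IsSourceAssignment : Prop :=
  ∀ i < P.length, 2 ≤ phraseLength P i →
    u i + phraseLength P i ≤ phraseStart P i ∧
      P.flatten.extract (u i) (u i + phraseLength P i) =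
        P.flatten.extract (phraseStart P i) (phraseStart P (i + 1))

def copyMap (x : ℕ) : ℕ :=
  if x < P.flatten.length ∧ x ∉ boundaryCuts P then
    u (phraseIndex P x) + (x - phraseStart P (phraseIndex P x))
  else x

variable {P u}

theorem copyMap_of_mem_boundaryCuts {x : ℕ} (hx : x ∈ boundaryCuts P) : copyMap P u x = x := by
  simp [copyMap, hx]

theorem copyMap_of_lt_of_lt {i x : ℕ} (hi : i < P.length) (hix : phraseStart P i < x)
    (hxi : x < phraseStart P (i + 1)) : copyMap P u x = u i + (x - phraseStart P i) := by
  have hx : x < P.flatten.length := hxi.trans_le (phraseStart_le P _)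
  rw [copyMap, if_pos ⟨hx, not_mem_boundaryCuts hix hxi⟩, phraseIndex_eq hi hix.le hxi]

theorem copyMap_lt_phraseStart (hu : IsSourceAssignment P u) {x : ℕ}
    (hx : x < P.flatten.length) (hxB : x ∉ boundaryCuts P) :
    copyMap P u x < phraseStart P (phraseIndex P x) := by
  have hi := phraseIndex_lt hx
  have h1 := phraseStart_phraseIndex_lt hx hxB
  have h2 := lt_phraseStart_phraseIndex_succ hx
  have hlen : 2 ≤ phraseLength P (phraseIndex P x) := by unfold phraseLength; omega
  have hsrc := (hu _ hi hlen).1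
  rw [copyMap_of_lt_of_lt hi h1 h2]
  unfold phraseLength at hsrc
  omega

theorem copyMap_le (hu : IsSourceAssignment P u) (x : ℕ) : copyMap P u x ≤ x := by
  by_cases h : x < P.flatten.length ∧ x ∉ boundaryCuts P
  · exact (copyMap_lt_phraseStart hu h.1 h.2).le.trans (phraseStart_phraseIndex_le P x)
  · rw [copyMap, if_neg h]

theorem iterate_copyMap_mem_boundaryCuts (hu : IsSourceAssignment P u) :
    ∀ {k x : ℕ}, x ≤ phraseStart P k → (copyMap P u)^[k] x ∈ boundaryCuts P
  | 0, x, hx => by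
    simpa [Nat.le_zero.mp (by simpa using hx)] using zero_mem_boundaryCuts P
  | k + 1, x, hx => by
    by_cases hxB : x ∈ boundaryCuts P
    · rwa [Function.iterate_fixed (copyMap_of_mem_boundaryCuts hxB)]
    have hxn : x < P.flatten.length := lt_of_le_of_ne (hx.trans (phraseStart_le P _))
      fun h => hxB (h ▸ length_mem_boundaryCuts P)
    have hik : phraseIndex P x ≤ k := Nat.lt_succ_iff.mp <| (phraseStart_mono P).reflect_lt
      ((phraseStart_phraseIndex_lt hxn hxB).trans_le hx)
    rw [Function.iterate_succ_apply]
    exact iterate_copyMap_mem_boundaryCuts hu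
      ((copyMap_lt_phraseStart hu hxn hxB).le.trans (phraseStart_mono P hik))

end CopyMap

section RefinedCuts

def sourceEnds (i : ℕ) : Finset ℕ := {u i, u i + phraseLength P i}

def sourceOrbits : Finset ℕ :=
  ((Finset.range P.length).filter (2 ≤ phraseLength P ·)).biUnion fun i =>
    (sourceEnds P u i).biUnion fun w => orbitPrefix (copyMap P u) w i

def refinedCuts : Finset ℕ := boundaryCuts P ∪ sourceOrbits P u

theorem card_boundaryCuts_le : (boundaryCuts P).card ≤ P.length + 1 :=
  Finset.card_image_le.trans (Finset.card_range _).le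

theorem card_sourceOrbits_le : (sourceOrbits P u).card ≤ P.length * (P.length - 1) := by
  rw [← Finset.sum_range_id_mul_two, Finset.sum_mul]
  refine Finset.card_biUnion_le.trans <| (Finset.sum_le_sum fun i _ => ?_).trans
    (Finset.sum_le_sum_of_subset (Finset.filter_subset _ _))
  calc _ ≤ ∑ w ∈ sourceEnds P u i, (orbitPrefix (copyMap P u) w i).card :=
        Finset.card_biUnion_le
    _ ≤ ∑ w ∈ sourceEnds P u i, i := Finset.sum_le_sum fun w _ => card_orbitPrefix_le _ _ _
    _ ≤ i * 2 := by
      rw [Finset.sum_const, smul_eq_mul, mul_comm]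
      exact Nat.mul_le_mul_left _ Finset.card_le_two

theorem card_refinedCuts_le : (refinedCuts P u).card ≤ P.length ^ 2 + 1 := by
  calc (refinedCuts P u).card ≤ P.length + 1 + P.length * (P.length - 1) :=
        (Finset.card_union_le _ _).trans
          (Nat.add_le_add (card_boundaryCuts_le P) (card_sourceOrbits_le P u))
    _ = P.length ^ 2 + 1 := by
      rcases P.length with _ | z
      · rfl
      · simp only [Nat.add_sub_cancel]
        ring

variable {P u}

theorem boundaryCuts_subset_refinedCuts : boundaryCuts P ⊆ refinedCuts P u :=
  Finset.subset_union_left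

theorem orbitPrefix_subset_refinedCuts {i w : ℕ} (hi : i < P.length)
    (hlen : 2 ≤ phraseLength P i) (hw : w ∈ sourceEnds P u i) :
    orbitPrefix (copyMap P u) w i ⊆ refinedCuts P u := fun x hx =>
  Finset.mem_union_right _ <| Finset.mem_biUnion.mpr ⟨i, by simp [hi, hlen],
    Finset.mem_biUnion.mpr ⟨w, hw, hx⟩⟩

theorem mem_refinedCuts {x : ℕ} :
    x ∈ refinedCuts P u ↔ x ∈ boundaryCuts P ∨ ∃ i < P.length, 2 ≤ phraseLength P i ∧
      ∃ w ∈ sourceEnds P u i, x ∈ orbitPrefix (copyMap P u) w i := by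
  simp [refinedCuts, sourceOrbits, and_assoc]

theorem le_phraseStart_of_mem_sourceEnds (hu : IsSourceAssignment P u) {i w : ℕ}
    (hi : i < P.length) (hlen : 2 ≤ phraseLength P i) (hw : w ∈ sourceEnds P u i) :
    w ≤ phraseStart P i := by
  have := (hu i hi hlen).1
  rcases Finset.mem_insert.mp hw with rfl | hw
  · omega
  · rw [Finset.mem_singleton.mp hw]; exact this

theorem le_length_of_mem_refinedCuts (hu : IsSourceAssignment P u) {x : ℕ}
    (hx : x ∈ refinedCuts P u) : x ≤ P.flatten.length := by
  rcases mem_refinedCuts.mp hx with hB | ⟨i, hi, hlen, w, hw, hxo⟩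
  · obtain ⟨k, -, rfl⟩ := Finset.mem_image.mp hB
    exact phraseStart_le P k
  · obtain ⟨m, -, rfl⟩ := Finset.mem_image.mp hxo
    exact (Function.iterate_le_id_of_le_id (copyMap_le hu) m w).trans
      ((le_phraseStart_of_mem_sourceEnds hu hi hlen hw).trans (phraseStart_le P i))

theorem copyMap_mem_refinedCuts (hu : IsSourceAssignment P u) {x : ℕ}
    (hx : x ∈ refinedCuts P u) : copyMap P u x ∈ refinedCuts P u := by
  rcases mem_refinedCuts.mp hx with hB | ⟨i, hi, hlen, w, hw, hxo⟩
  · rwa [copyMap_of_mem_boundaryCuts hB]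
  · rcases apply_mem_orbitPrefix _ hxo with h | h
    · exact orbitPrefix_subset_refinedCuts hi hlen hw h
    · exact h ▸ boundaryCuts_subset_refinedCuts
        (iterate_copyMap_mem_boundaryCuts hu (le_phraseStart_of_mem_sourceEnds hu hi hlen hw))

end RefinedCuts

variable {P u}

theorem extract_eq_extract_source (hu : IsSourceAssignment P u) {i a b : ℕ} (hi : i < P.length)
    (hlen : 2 ≤ phraseLength P i) (hia : phraseStart P i ≤ a) (hab : a ≤ b)
    (hbi : b ≤ phraseStart P (i + 1)) :
    P.flatten.extract a b =
      P.flatten.extract (u i + (a - phraseStart P i)) (u i + (b - phraseStart P i)) := by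
  have hsrc := (hu i hi hlen).2
  unfold phraseLength at hsrc
  calc P.flatten.extract a b
      = (P.flatten.extract (phraseStart P i) (phraseStart P (i + 1))).extract
          (a - phraseStart P i) (b - phraseStart P i) := by
        rw [extract_extract _ (by omega) (by omega), Nat.add_sub_cancel' hia,
          Nat.add_sub_cancel' (hia.trans hab)]
    _ = _ := by rw [← hsrc, extract_extract _ (by omega) (by omega)]

theorem source_shift_mem_refinedCuts (hu : IsSourceAssignment P u) {i x : ℕ} (hi : i < P.length)
    (hlen : 2 ≤ phraseLength P i) (hx : x ∈ refinedCuts P u) (hix : phraseStart P i ≤ x)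
    (hxi : x ≤ phraseStart P (i + 1)) : u i + (x - phraseStart P i) ∈ refinedCuts P u := by
  have hi0 : 0 < i := (phraseStart_mono P).reflect_lt <| by
    have := (hu i hi hlen).1
    rw [phraseStart_zero]
    omega
  rcases hix.eq_or_lt with rfl | hix
  · rw [Nat.sub_self, Nat.add_zero]
    exact orbitPrefix_subset_refinedCuts hi hlen (by simp [sourceEnds])
      (self_mem_orbitPrefix _ _ hi0)
  rcases hxi.eq_or_lt with rfl | hxi
  · exact orbitPrefix_subset_refinedCuts hi hlen (by simp [sourceEnds, phraseLength])
      (self_mem_orbitPrefix _ _ hi0)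
  rw [← copyMap_of_lt_of_lt hi hix hxi]
  exact copyMap_mem_refinedCuts hu hx

theorem refinedCuts_gap (hu : IsSourceAssignment P u) {a b : ℕ} (ha : a ∈ refinedCuts P u)
    (hb : b ∈ refinedCuts P u) (hab : a < b)
    (hcons : ∀ c ∈ refinedCuts P u, c ≤ a ∨ b ≤ c) :
    b = a + 1 ∨ ∃ a' ∈ refinedCuts P u, ∃ b' ∈ refinedCuts P u,
      a' < b' ∧ b' ≤ a ∧ P.flatten.extract a b = P.flatten.extract a' b' := by
  refine or_iff_not_imp_left.mpr fun hab1 => ?_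
  have han : a < P.flatten.length := hab.trans_le (le_length_of_mem_refinedCuts hu hb)
  set i := phraseIndex P a
  have hi : i < P.length := phraseIndex_lt han
  have hia : phraseStart P i ≤ a := phraseStart_phraseIndex_le P a
  have hai : a < phraseStart P (i + 1) := lt_phraseStart_phraseIndex_succ han
  have hbi : b ≤ phraseStart P (i + 1) :=
    (hcons _ (boundaryCuts_subset_refinedCuts
      (phraseStart_mem_boundaryCuts (k := i + 1) P hi))).resolve_left (by omega)
  have hlen : 2 ≤ phraseLength P i := by unfold phraseLength; omega
  have hsrc := (hu i hi hlen).1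
  unfold phraseLength at hsrc
  exact ⟨_, source_shift_mem_refinedCuts hu hi hlen ha hia hai.le,
    _, source_shift_mem_refinedCuts hu hi hlen hb (by omega) hbi, by omega, by omega,
    extract_eq_extract_source hu hi hlen hia hab.le hbi⟩

theorem exists_isSourceAssignment
    (hsrc : ∀ i : Fin P.length, 1 < (P.get i).length → P.get i <:+: (P.take i.1).flatten) :
    ∃ u, IsSourceAssignment P u := by
  have hex : ∀ i, ∃ v, i < P.length → 2 ≤ phraseLength P i →
      v + phraseLength P i ≤ phraseStart P i ∧
        P.flatten.extract v (v + phraseLength P i) =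
          P.flatten.extract (phraseStart P i) (phraseStart P (i + 1)) := by
    intro i
    by_cases hi : i < P.length
    · by_cases hlen : 2 ≤ phraseLength P i
      · rw [phraseLength_eq P hi] at hlen ⊢
        obtain ⟨v, hv, heq⟩ := exists_extract_eq_of_isInfix_of_isPrefix (hsrc ⟨i, hi⟩ hlen)
          (take_prefix i P).flatten
        exact ⟨v, fun _ _ => ⟨hv, heq.trans (extract_phraseStart P hi).symm⟩⟩
      · exact ⟨0, fun _ h => absurd h hlen⟩
    · exact ⟨0, fun h => absurd h hi⟩
  choose u hu using hex
  exact ⟨u, fun i hi hlen => hu i hi hlen⟩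

end LZ77Refinement

open LZ77Refinement

theorem lz77_refinement_at_most_z_squared_general {α : Type} (s : List α)
    (P : List (List α)) (hPs : P.flatten = s)
    (hsrc : ∀ i : Fin P.length, 1 < (P.get i).length → P.get i <:+: (P.take i.1).flatten) :
    ∃ Q : List (List α), Q.flatten = s ∧ (∀ p ∈ Q, p ≠ []) ∧
      boundaries P ⊆ boundaries Q ∧
      (∀ i : Fin Q.length, (Q.get i).length = 1 ∨ IsConcatOfPrecedingPhrases Q i) ∧
      Q.length ≤ P.length ^ 2 := by
  subst hPs
  obtain ⟨u, hu⟩ := exists_isSourceAssignment hsrc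
  obtain ⟨Q, hQ, hne, hcuts, hphrases, hlen⟩ :=
    exists_factorization_of_cuts P.flatten (refinedCuts P u)
      (boundaryCuts_subset_refinedCuts (zero_mem_boundaryCuts P))
      (boundaryCuts_subset_refinedCuts (length_mem_boundaryCuts P))
      (fun _ hx => le_length_of_mem_refinedCuts hu hx)
      (fun _ ha _ hb hab hcons => refinedCuts_gap hu ha hb hab hcons)
  refine ⟨Q, hQ, hne, ?_, hphrases, ?_⟩
  · rw [← coe_boundaryCuts]
    exact (Finset.coe_subset.mpr boundaryCuts_subset_refinedCuts).trans hcuts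
  · have := card_refinedCuts_le P u
    omega

/-- Refining an LZ77-style factorization (each phrase of length `> 1` occurs in the
preceding prefix) so that every phrase's source begins and ends at phrase boundaries
yields a factorization with at most `z²` phrases, each of which is a single character
or a concatenation of complete consecutive preceding phrases. -/
theorem lz77_refinement_at_most_z_squared {α : Type} (s : List α)
    (P : List (List α)) (hPs : P.flatten = s) (hne : ∀ p ∈ P, p ≠ [])
    (hsrc : ∀ i : Fin P.length, 1 < (P.get i).length → P.get i <:+: (P.take i.1).flatten) :
    ∃ Q : List (List α), Q.flatten = s ∧ (∀ p ∈ Q, p ≠ []) ∧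
      boundaries P ⊆ boundaries Q ∧
      (∀ i : Fin Q.length, (Q.get i).length = 1 ∨ IsConcatOfPrecedingPhrases Q i) ∧
      Q.length ≤ P.length ^ 2 :=
  lz77_refinement_at_most_z_squared_general s P hPs hsrc
end

section
/- If a string s admits a factorization into m phrases such that every phrase is either a single character or the concatenation of complete consecutive preceding phrases, then there is a context-free grammar in Chomsky normal form generating exactly {s} with O(m log m) productions. -/
open List

/-!
Nonterminals are intervals `[a, b)` of phrase indices, deriving the concatenation of the phrases
`a, …, b - 1`. An interval of length at least two is split after the largest power of two
`2 ^ l < b - a`: the left part is a dyadic block `[a, a + 2 ^ l)`, the right part keeps the end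
point and at most half the length. Hence splitting a dyadic block yields dyadic blocks, and the
right parts reached from an interval form a chain of at most `log m + 1` intervals. A phrase
`[i, i + 1)` is a single character or uses the rule of a source interval made of at least two
earlier phrases (a copy of a single earlier phrase is traced back to that phrase's source), so the
only chains needed start at the `m` sources and at `[0, m)`. With the `m (log m + 1)` dyadic blocks
this gives at most `3 m (log m + 1)` rules. Derivations terminate because every child interval
ends earlier, or ends at the same point and starts later.
-/

def Symbol.eval {T N : Type*} (val : N → List T) : Symbol T N → List T
  | .terminal a => [a]
  | .nonterminal A => val A

namespace ContextFreeGrammar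

variable {T : Type*} {g : ContextFreeGrammar T} {val : g.NT → List T}

lemma Derives.flatMap_eval_eq
    (hval : ∀ r ∈ g.rules, val r.input = r.output.flatMap (Symbol.eval val))
    {u v : List (Symbol T g.NT)} (h : g.Derives u v) :
    u.flatMap (Symbol.eval val) = v.flatMap (Symbol.eval val) := by
  induction h with
  | refl => rfl
  | tail _ hp ih =>
    obtain ⟨r, hr, hrw⟩ := hp
    obtain ⟨p, q, rfl, rfl⟩ := hrw.exists_parts
    simp [ih, hval r hr, Symbol.eval]

lemma derives_flatMap {w : List (Symbol T g.NT)} {f : Symbol T g.NT → List (Symbol T g.NT)}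
    (h : ∀ x ∈ w, g.Derives [x] (f x)) : g.Derives w (w.flatMap f) := by
  induction w with
  | nil => rfl
  | cons x w ih =>
    rw [flatMap_cons]
    exact ((h x mem_cons_self).append_right w).trans
      ((ih fun y hy => h y (mem_cons_of_mem x hy)).append_left (f x))

lemma derives_map_terminal_of_rank (rank : g.NT → ℕ) {S : Set g.NT}
    (hS : ∀ A ∈ S, ∃ w, ⟨A, w⟩ ∈ g.rules ∧ val A = w.flatMap (Symbol.eval val) ∧
      ∀ B, Symbol.nonterminal B ∈ w → B ∈ S ∧ rank B < rank A)
    {A : g.NT} (hA : A ∈ S) :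
    g.Derives [Symbol.nonterminal A] ((val A).map Symbol.terminal) := by
  induction hn : rank A using Nat.strong_induction_on generalizing A with
  | _ n ih =>
  obtain ⟨w, hw, hval, hB⟩ := hS A hA
  refine Produces.trans_derives ⟨_, hw, ContextFreeRule.Rewrites.input_output⟩ ?_
  rw [hval, map_flatMap]
  refine derives_flatMap fun x hx => ?_
  cases x with
  | terminal a => rfl
  | nonterminal B => exact ih _ (hn ▸ (hB B hx).2) (hB B hx).1 rfl

theorem language_eq_singleton_of_rank (rank : g.NT → ℕ) {S : Set g.NT}
    (hsound : ∀ r ∈ g.rules, val r.input = r.output.flatMap (Symbol.eval val))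
    (hS : ∀ A ∈ S, ∃ w, ⟨A, w⟩ ∈ g.rules ∧ val A = w.flatMap (Symbol.eval val) ∧
      ∀ B, Symbol.nonterminal B ∈ w → B ∈ S ∧ rank B < rank A)
    (hinit : g.initial ∈ S) :
    g.language = {val g.initial} := by
  ext w
  rw [mem_language_iff]
  change _ ↔ w = _
  constructor
  · intro h
    simpa [flatMap_map, Function.comp_def, Symbol.eval] using (h.flatMap_eval_eq hsound).symm
  · rintro rfl
    exact derives_map_terminal_of_rank rank hS hinit

end ContextFreeGrammar

namespace PhraseGrammar

def splitPoint (x : ℕ × ℕ) : ℕ := x.1 + 2 ^ Nat.log 2 (x.2 - x.1 - 1)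

def leftPart (x : ℕ × ℕ) : ℕ × ℕ := (x.1, splitPoint x)

def rightPart (x : ℕ × ℕ) : ℕ × ℕ := (splitPoint x, x.2)

lemma lt_splitPoint (x : ℕ × ℕ) : x.1 < splitPoint x := by
  have := Nat.one_le_two_pow (n := Nat.log 2 (x.2 - x.1 - 1))
  unfold splitPoint
  omega

lemma splitPoint_lt {x : ℕ × ℕ} (h : x.1 + 2 ≤ x.2) : splitPoint x < x.2 := by
  have := Nat.pow_log_le_self 2 (show x.2 - x.1 - 1 ≠ 0 by omega)
  unfold splitPoint
  omega

lemma splitPoint_of_eq_pow {x : ℕ × ℕ} {l : ℕ} (h : x.2 = x.1 + 2 ^ (l + 1)) :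
    splitPoint x = x.1 + 2 ^ l := by
  have hpow : 2 ^ (l + 1) = 2 * 2 ^ l := by ring
  have hpos := Nat.one_le_two_pow (n := l)
  have hlog : Nat.log 2 (x.2 - x.1 - 1) = l :=
    Nat.log_eq_of_pow_le_of_lt_pow (by omega) (by omega)
  rw [splitPoint, hlog]

lemma two_mul_sub_splitPoint_le (x : ℕ × ℕ) : 2 * (x.2 - splitPoint x) ≤ x.2 - x.1 := by
  have hpos := Nat.one_le_two_pow (n := Nat.log 2 (x.2 - x.1 - 1))
  have hlt := Nat.lt_pow_succ_log_self (b := 2) (by norm_num) (x.2 - x.1 - 1)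
  rw [pow_succ] at hlt
  unfold splitPoint
  omega

lemma iterate_rightPart_snd (x : ℕ × ℕ) (t : ℕ) : (rightPart^[t] x).2 = x.2 := by
  induction t with
  | zero => rfl
  | succ t ih => rw [Function.iterate_succ_apply', ← ih]; rfl

lemma two_pow_mul_length_iterate_rightPart_le (x : ℕ × ℕ) (t : ℕ) :
    2 ^ t * ((rightPart^[t] x).2 - (rightPart^[t] x).1) ≤ x.2 - x.1 := by
  induction t with
  | zero => simp
  | succ t ih =>
    have := two_mul_sub_splitPoint_le (rightPart^[t] x)
    rw [Function.iterate_succ_apply', pow_succ']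
    simp only [rightPart] at this ⊢
    calc 2 * 2 ^ t * ((rightPart^[t] x).2 - splitPoint (rightPart^[t] x))
        = 2 ^ t * (2 * ((rightPart^[t] x).2 - splitPoint (rightPart^[t] x))) := by ring
      _ ≤ 2 ^ t * ((rightPart^[t] x).2 - (rightPart^[t] x).1) := by gcongr
      _ ≤ x.2 - x.1 := ih

def intervalRank (x : ℕ × ℕ) : ℕ := x.2 * x.2 + (x.2 - x.1)

lemma intervalRank_lt_of_snd_lt {x y : ℕ × ℕ} (h : y.2 < x.2) :
    intervalRank y < intervalRank x := by
  have hsq := Nat.mul_self_le_mul_self (show y.2 + 1 ≤ x.2 from h)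
  have hlen : y.2 - y.1 ≤ y.2 := Nat.sub_le _ _
  unfold intervalRank
  nlinarith

lemma intervalRank_rightPart_lt {x : ℕ × ℕ} (h : x.1 < x.2) :
    intervalRank (rightPart x) < intervalRank x := by
  have := lt_splitPoint x
  unfold intervalRank rightPart
  dsimp only
  omega

section

variable {α : Type*}

def segment (Q : List (List α)) (x : ℕ × ℕ) : List α :=
  ((Q.drop x.1).take (x.2 - x.1)).flatten

lemma segment_append (Q : List (List α)) {a b c : ℕ} (hab : a ≤ b) (hbc : b ≤ c) :
    segment Q (a, b) ++ segment Q (b, c) = segment Q (a, c) := by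
  have hsplit : c - a = (b - a) + (c - b) := by omega
  simp only [segment, hsplit, take_add, flatten_append, drop_drop]
  congr 4
  omega

lemma segment_succ (Q : List (List α)) (a : ℕ) : segment Q (a, a + 1) = Q.getD a [] := by
  rcases lt_or_ge a Q.length with ha | ha
  · rw [segment, drop_eq_getElem_cons ha, Nat.add_sub_cancel_left, getD_eq_getElem _ _ ha,
      take_one, head?_cons]
    simp
  · rw [segment, drop_eq_nil_of_le ha, getD_eq_default _ _ ha]
    simp

lemma segment_zero_length (Q : List (List α)) : segment Q (0, Q.length) = Q.flatten := by
  simp [segment]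

end

variable {α : Type} {Q : List (List α)} {x : ℕ × ℕ}

def IsHierarchical (Q : List (List α)) : Prop :=
  ∀ i : Fin Q.length, (Q.get i).length = 1 ∨ IsConcatOfPrecedingPhrases Q i

lemma exists_source (hQ : IsHierarchical Q) {i : ℕ} (hi : i < Q.length)
    (h1 : (Q.getD i []).length ≠ 1) :
    ∃ x : ℕ × ℕ, x.1 + 2 ≤ x.2 ∧ x.2 ≤ i ∧ Q.getD i [] = segment Q x := by
  induction i using Nat.strong_induction_on with
  | _ i ih =>
  have hget : Q.get ⟨i, hi⟩ = Q.getD i [] := (getD_eq_getElem _ _ hi).symm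
  obtain h | ⟨j, k, hjk, hki, hconcat⟩ := hQ ⟨i, hi⟩
  · exact absurd (hget ▸ h) h1
  rw [hget] at hconcat
  replace hki : k ≤ i := hki
  obtain hk | rfl : j + 2 ≤ k ∨ k = j + 1 := by omega
  · exact ⟨(j, k), hk, hki, hconcat⟩
  · have hunit : Q.getD i [] = Q.getD j [] := hconcat.trans (segment_succ Q j)
    obtain ⟨x, hx2, hxj, hxseg⟩ := ih j (by omega) (by omega) (hunit ▸ h1)
    exact ⟨x, hx2, by omega, hunit.trans hxseg⟩

noncomputable def source (Q : List (List α)) (i : ℕ) : ℕ × ℕ :=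
  Classical.epsilon fun x => x.1 + 2 ≤ x.2 ∧ x.2 ≤ i ∧ Q.getD i [] = segment Q x

lemma source_spec (hQ : IsHierarchical Q) {i : ℕ} (hi : i < Q.length)
    (h1 : (Q.getD i []).length ≠ 1) :
    (source Q i).1 + 2 ≤ (source Q i).2 ∧ (source Q i).2 ≤ i ∧
      Q.getD i [] = segment Q (source Q i) :=
  Classical.epsilon_spec (exists_source hQ hi h1)

-- For a single-character phrase `source Q i` is a junk value; it only adds a harmless root.
noncomputable def roots (Q : List (List α)) : Finset (ℕ × ℕ) :=
  insert (0, Q.length) ((Finset.range Q.length).image (source Q))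

def IsNonterminal (Q : List (List α)) (x : ℕ × ℕ) : Prop :=
  x.1 < x.2 ∧ x.2 ≤ Q.length ∧
    ((∃ l, x.2 = x.1 + 2 ^ l) ∨ ∃ y ∈ roots Q, ∃ t, rightPart^[t] y = x)

lemma isNonterminal_leftPart (hx : IsNonterminal Q x) (h2 : x.1 + 2 ≤ x.2) :
    IsNonterminal Q (leftPart x) :=
  ⟨lt_splitPoint x, (splitPoint_lt h2).le.trans hx.2.1, Or.inl ⟨_, rfl⟩⟩

lemma isNonterminal_rightPart (hx : IsNonterminal Q x) (h2 : x.1 + 2 ≤ x.2) :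
    IsNonterminal Q (rightPart x) := by
  refine ⟨splitPoint_lt h2, hx.2.1, ?_⟩
  obtain ⟨-, -, ⟨_ | l, hl⟩ | ⟨y, hy, t, rfl⟩⟩ := hx
  · rw [pow_zero] at hl
    omega
  · have hpow : 2 ^ (l + 1) = 2 * 2 ^ l := by ring
    exact Or.inl ⟨l, by simp only [rightPart, splitPoint_of_eq_pow hl]; omega⟩
  · exact Or.inr ⟨y, hy, t + 1, Function.iterate_succ_apply' _ _ _⟩

lemma isNonterminal_source (hQ : IsHierarchical Q) {i : ℕ} (hi : i < Q.length)
    (h1 : (Q.getD i []).length ≠ 1) :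
    IsNonterminal Q (source Q i) := by
  obtain ⟨h2, hle, -⟩ := source_spec hQ hi h1
  exact ⟨by omega, by omega, Or.inr ⟨_, Finset.mem_insert_of_mem
    (Finset.mem_image_of_mem _ (Finset.mem_range.2 hi)), 0, rfl⟩⟩

lemma isNonterminal_zero_length (hm : 1 ≤ Q.length) : IsNonterminal Q (0, Q.length) :=
  ⟨hm, le_rfl, Or.inr ⟨_, Finset.mem_insert_self _ _, 0, rfl⟩⟩

def splitBody (x : ℕ × ℕ) : List (Symbol α (ℕ × ℕ)) :=
  [.nonterminal (leftPart x), .nonterminal (rightPart x)]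

noncomputable def ruleBody (Q : List (List α)) (x : ℕ × ℕ) : List (Symbol α (ℕ × ℕ)) :=
  if x.1 + 2 ≤ x.2 then splitBody x
  else if (Q.getD x.1 []).length = 1 then (Q.getD x.1 []).map Symbol.terminal
  else splitBody (source Q x.1)

lemma flatMap_eval_splitBody (h : x.1 + 2 ≤ x.2) :
    (splitBody x).flatMap (Symbol.eval (segment Q)) = segment Q x := by
  simp only [splitBody, flatMap_cons, flatMap_nil, Symbol.eval, append_nil, leftPart, rightPart]
  exact segment_append Q (lt_splitPoint x).le (splitPoint_lt h).le

lemma segment_eq_flatMap_eval_ruleBody (hQ : IsHierarchical Q) (hx : IsNonterminal Q x) :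
    segment Q x = (ruleBody Q x).flatMap (Symbol.eval (segment Q)) := by
  obtain ⟨a, b⟩ := x
  obtain ⟨hab, hbm, -⟩ := hx
  unfold ruleBody
  split_ifs with h2 h1
  · exact (flatMap_eval_splitBody h2).symm
  · obtain rfl : b = a + 1 := by omega
    simp [segment_succ, flatMap_map, Symbol.eval]
  · obtain rfl : b = a + 1 := by omega
    obtain ⟨hsrc, -, hseg⟩ := source_spec hQ (by omega) h1
    rw [flatMap_eval_splitBody hsrc, segment_succ, hseg]

lemma mem_splitBody (hx : IsNonterminal Q x) (h2 : x.1 + 2 ≤ x.2) {y : ℕ × ℕ}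
    (hy : Symbol.nonterminal y ∈ (splitBody x : List (Symbol α (ℕ × ℕ)))) :
    IsNonterminal Q y ∧ intervalRank y < intervalRank x := by
  simp only [splitBody, mem_cons, Symbol.nonterminal.injEq, not_mem_nil, or_false] at hy
  rcases hy with rfl | rfl
  · exact ⟨isNonterminal_leftPart hx h2, intervalRank_lt_of_snd_lt (splitPoint_lt h2)⟩
  · exact ⟨isNonterminal_rightPart hx h2, intervalRank_rightPart_lt hx.1⟩

lemma mem_ruleBody (hQ : IsHierarchical Q) (hx : IsNonterminal Q x) {y : ℕ × ℕ}
    (hy : Symbol.nonterminal y ∈ ruleBody Q x) :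
    IsNonterminal Q y ∧ intervalRank y < intervalRank x := by
  unfold ruleBody at hy
  split_ifs at hy with h2 h1
  · exact mem_splitBody hx h2 hy
  · simp at hy
  · have hi : x.1 < Q.length := hx.1.trans_le hx.2.1
    obtain ⟨hsrc, hsrci, -⟩ := source_spec hQ hi h1
    obtain ⟨hyN, hyrank⟩ := mem_splitBody (isNonterminal_source hQ hi h1) hsrc hy
    exact ⟨hyN, hyrank.trans (intervalRank_lt_of_snd_lt (hsrci.trans_lt hx.1))⟩

open Classical in
noncomputable def nonterminals (Q : List (List α)) : Finset (ℕ × ℕ) :=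
  (Finset.range (Q.length + 1) ×ˢ Finset.range (Q.length + 1)).filter (IsNonterminal Q)

lemma mem_nonterminals : x ∈ nonterminals Q ↔ IsNonterminal Q x := by
  simp only [nonterminals, Finset.mem_filter, Finset.mem_product, Finset.mem_range,
    and_iff_right_iff_imp]
  rintro ⟨hlt, hle, -⟩
  omega

open Classical in
noncomputable def phraseGrammar (Q : List (List α)) : ContextFreeGrammar α where
  NT := ℕ × ℕ
  initial := (0, Q.length)
  rules := (nonterminals Q).image fun x => ⟨x, ruleBody Q x⟩

lemma mem_rules_phraseGrammar {r : ContextFreeRule α (ℕ × ℕ)} :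
    r ∈ (phraseGrammar Q).rules ↔ ∃ x ∈ nonterminals Q, ⟨x, ruleBody Q x⟩ = r := by
  classical
  exact Finset.mem_image

lemma isCNF_phraseGrammar (Q : List (List α)) : IsCNF (phraseGrammar Q) := by
  intro r hr
  obtain ⟨x, -, rfl⟩ := mem_rules_phraseGrammar.1 hr
  dsimp only [ruleBody]
  split_ifs with h2 h1
  · exact Or.inr ⟨_, _, rfl⟩
  · obtain ⟨c, hc⟩ := length_eq_one_iff.1 h1
    exact Or.inl ⟨c, by rw [hc]; rfl⟩
  · exact Or.inr ⟨_, _, rfl⟩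

theorem language_phraseGrammar (hQ : IsHierarchical Q) (hm : 1 ≤ Q.length) :
    (phraseGrammar Q).language = {Q.flatten} := by
  rw [← segment_zero_length]
  refine ContextFreeGrammar.language_eq_singleton_of_rank (g := phraseGrammar Q)
    (val := segment Q) intervalRank (S := {x | IsNonterminal Q x}) ?_ ?_
    (isNonterminal_zero_length hm)
  · intro r hr
    obtain ⟨x, hx, rfl⟩ := mem_rules_phraseGrammar.1 hr
    exact segment_eq_flatMap_eval_ruleBody hQ (mem_nonterminals.1 hx)
  · intro x hx
    exact ⟨ruleBody Q x, mem_rules_phraseGrammar.2 ⟨x, mem_nonterminals.2 hx, rfl⟩,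
      segment_eq_flatMap_eval_ruleBody hQ hx, fun y hy => mem_ruleBody hQ hx hy⟩

lemma nonterminals_subset (Q : List (List α)) :
    nonterminals Q ⊆
      ((Finset.range Q.length ×ˢ Finset.range (Nat.log 2 Q.length + 1)).image
          fun p => (p.1, p.1 + 2 ^ p.2)) ∪
        ((roots Q ×ˢ Finset.range (Nat.log 2 Q.length + 1)).image
          fun p => rightPart^[p.2] p.1) := by
  intro x hx
  obtain ⟨hlt, hle, ⟨l, hl⟩ | ⟨y, hy, t, rfl⟩⟩ := mem_nonterminals.1 hx
  · refine Finset.mem_union_left _ (Finset.mem_image.2 ⟨(x.1, l), ?_, by rw [← hl]⟩)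
    simp only [Finset.mem_product, Finset.mem_range]
    exact ⟨by omega, Nat.lt_succ_of_le (Nat.le_log_of_pow_le one_lt_two (by omega))⟩
  · refine Finset.mem_union_right _ (Finset.mem_image.2 ⟨(y, t), ?_, rfl⟩)
    simp only [Finset.mem_product, Finset.mem_range]
    refine ⟨hy, Nat.lt_succ_of_le (Nat.le_log_of_pow_le one_lt_two ?_)⟩
    have hhalf := two_pow_mul_length_iterate_rightPart_le y t
    rw [iterate_rightPart_snd] at hle hlt hhalf
    calc 2 ^ t ≤ 2 ^ t * (y.2 - (rightPart^[t] y).1) := Nat.le_mul_of_pos_right _ (by omega)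
      _ ≤ Q.length := by omega

lemma card_roots_le (Q : List (List α)) : (roots Q).card ≤ Q.length + 1 :=
  (Finset.card_insert_le _ _).trans
    (Nat.add_le_add_right (Finset.card_image_le.trans (Finset.card_range _).le) 1)

lemma card_nonterminals_le (hm : 1 ≤ Q.length) :
    (nonterminals Q).card ≤ 3 * Q.length * (Nat.log 2 Q.length + 1) := by
  set m := Q.length
  set L := Nat.log 2 m
  have hblocks : (Finset.range m ×ˢ Finset.range (L + 1)).card = m * (L + 1) := by
    rw [Finset.card_product, Finset.card_range, Finset.card_range]
  have hchains : (roots Q ×ˢ Finset.range (L + 1)).card ≤ (m + 1) * (L + 1) := by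
    rw [Finset.card_product, Finset.card_range]
    exact Nat.mul_le_mul_right _ (card_roots_le Q)
  calc (nonterminals Q).card
      ≤ m * (L + 1) + (m + 1) * (L + 1) :=
        (Finset.card_le_card (nonterminals_subset Q)).trans <| (Finset.card_union_le _ _).trans <|
          add_le_add (Finset.card_image_le.trans hblocks.le) (Finset.card_image_le.trans hchains)
    _ ≤ 3 * m * (L + 1) := by nlinarith

lemma card_rules_phraseGrammar_le (hm : 1 ≤ Q.length) :
    (phraseGrammar Q).rules.card ≤ 3 * Q.length * (Nat.log 2 Q.length + 1) := by
  classical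
  dsimp only [phraseGrammar]
  exact Finset.card_image_le.trans (card_nonterminals_le hm)

end PhraseGrammar

open PhraseGrammar in
/-- If `s` factors into `m` phrases, each a single character or a concatenation of
complete consecutive preceding phrases, then some CNF grammar of `O(m log m)`
productions generates exactly `{s}`. -/
theorem cnf_grammar_from_hierarchical_factorization :
    ∃ C : ℕ, ∀ {α : Type} (s : List α) (Q : List (List α)),
      Q.flatten = s → (∀ p ∈ Q, p ≠ []) →
      (∀ i : Fin Q.length, (Q.get i).length = 1 ∨ IsConcatOfPrecedingPhrases Q i) →
      1 ≤ Q.length →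
      ∃ G : ContextFreeGrammar α, IsCNF G ∧ G.language = {s} ∧
        G.rules.card ≤ C * Q.length * (Nat.log 2 Q.length + 1) := by
  refine ⟨3, fun s Q hs _ hQ hm => ⟨phraseGrammar Q, isCNF_phraseGrammar Q, ?_, ?_⟩⟩
  · rw [language_phraseGrammar hQ hm, hs]
  · exact card_rules_phraseGrammar_le hm
end

section
/- If the LZ77 parse of s has z phrases, then there is a context-free grammar in Chomsky normal form generating exactly {s} of size O(z² log z); consequently, since z ≤ g, the smallest grammar problem admits an O(g log g)-approximation via this construction. -/
/-!
A copy parse of `s` is a factorisation into phrases each of which is a letter or occurs in the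
text before it. The LZ77 parse is one, and by greediness its phrase boundaries stay ahead of those
of any other copy parse, so it is a shortest one.

Upper bound. Build a straight-line program phrase by phrase, with a root deriving the parsed
prefix. The node of a new phrase is no higher than the old root and the new root joins the two,
so after `k` phrases the root has height at most `k`. A copied phrase is an infix of the root's
string, and cutting a prefix or a suffix off a node of height `h` creates at most `h` new nodes,
one per level of the cut. So each phrase costs `O(z)` nodes, and the program, read as a grammar,
is in Chomsky normal form with `O(z²)` rules.

Lower bound. Walk through a derivation of `s` from left to right, expanding a nonterminal (along
a shortest derivation of its yield) only at its first occurrence and emitting every later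
occurrence as one copied phrase. Each rule is paid for at most once, so this copy parse has at
most `g` phrases, whence `z ≤ g`.
-/

open List

/-! ## Copy parses and the optimality of LZ77 -/

section

variable {α : Type*}

/-- `CopyParse x Q`: every phrase of `Q` is a letter or an infix of the text preceding it, where
that text starts with `x`. -/
inductive CopyParse : List α → List (List α) → Prop
  | nil (x : List α) : CopyParse x []
  | cons {x p : List α} {Q : List (List α)} :
      p.length = 1 ∨ p <:+: x → CopyParse (x ++ p) Q → CopyParse x (p :: Q)

namespace CopyParse

variable {x : List α} {Q Q₁ Q₂ : List (List α)}

theorem append (h₁ : CopyParse x Q₁) (h₂ : CopyParse (x ++ Q₁.flatten) Q₂) :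
    CopyParse x (Q₁ ++ Q₂) := by
  induction h₁ with
  | nil x => simpa using h₂
  | cons hp _ ih => exact .cons hp (ih (by simpa using h₂))

theorem of_getElem
    (h : ∀ i (hi : i < Q.length), Q[i].length = 1 ∨ Q[i] <:+: x ++ (Q.take i).flatten) :
    CopyParse x Q := by
  induction Q generalizing x with
  | nil => exact .nil x
  | cons p Q ih =>
    have h0 := h 0 (by simp)
    rw [List.getElem_cons_zero] at h0
    refine .cons (by simpa using h0) (ih fun i hi => ?_)
    have hi' := h (i + 1) (by simpa using hi)
    rw [List.getElem_cons_succ] at hi'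
    simpa using hi'

end CopyParse

def phraseStart (P : List (List α)) (k : ℕ) : ℕ := ((P.map List.length).take k).sum

section phraseStart

variable {P : List (List α)} {k : ℕ}

theorem take_phraseStart : P.flatten.take (phraseStart P k) = (P.take k).flatten :=
  List.take_sum_flatten P k

theorem drop_phraseStart : P.flatten.drop (phraseStart P k) = (P.drop k).flatten :=
  List.drop_sum_flatten P k

theorem phraseStart_succ (hk : k < P.length) :
    phraseStart P (k + 1) = phraseStart P k + P[k].length := by
  rw [phraseStart, phraseStart, List.sum_take_succ _ k (by simpa using hk), List.getElem_map]

theorem phraseStart_lt_length (hne : ∀ p ∈ P, p ≠ []) (hk : k < P.length) :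
    phraseStart P k < P.flatten.length := by
  have h : P.flatten.drop (phraseStart P k) ≠ [] := by
    rw [drop_phraseStart, List.drop_eq_getElem_cons hk, List.flatten_cons]
    exact List.append_ne_nil_of_left_ne_nil (hne _ (List.getElem_mem hk)) _
  simpa using h

end phraseStart

theorem add_length_le_of_maximal {s p : List α} {b c ℓ : ℕ} (hcb : c ≤ b)
    (hp : p <+: s.drop c) (hpc : p.length = 1 ∨ p <:+: s.take c) (hℓ : 0 < ℓ)
    (hmax : ∀ q, q <+: s.drop b → q <:+: s.take b → q.length ≤ ℓ) :
    c + p.length ≤ b + ℓ := by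
  rcases hpc with hp1 | hpc
  · omega
  -- the part of `p` beyond position `b` is a candidate for the greedy phrase at `b`
  have hq := hmax (p.drop (b - c)) ?_ ?_
  · simp only [List.length_drop] at hq
    omega
  · simpa [List.drop_drop, Nat.add_sub_cancel' hcb] using hp.drop (b - c)
  · exact (List.drop_suffix _ _).isInfix.trans (hpc.trans (List.take_prefix_take_left hcb).isInfix)

end

namespace IsLZ77Parse

variable {α : Type} {s : List α} {P Q : List (List α)}

theorem copyParse (hP : IsLZ77Parse s P) : CopyParse [] P :=
  .of_getElem fun i hi => by simpa using (hP.2.2 ⟨i, hi⟩).1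

theorem length_le_length_getElem (hP : IsLZ77Parse s P) {k : ℕ} (hk : k < P.length) {q : List α}
    (hq : q <+: s.drop (phraseStart P k)) (hq' : q <:+: s.take (phraseStart P k)) :
    q.length ≤ P[k].length := by
  obtain ⟨rfl, hne, hgreedy⟩ := hP
  have hmax :=
    (hgreedy ⟨k, hk⟩).2 q (by rwa [← drop_phraseStart]) (by rwa [← take_phraseStart])
  have hpos := List.length_pos_iff.mpr (hne _ (List.getElem_mem hk))
  simp only [List.get_eq_getElem] at hmax
  omega

theorem length_le_add_length (hP : IsLZ77Parse s P) :
    ∀ {c k : ℕ}, CopyParse (s.take c) Q → Q.flatten = s.drop c → c ≤ phraseStart P k →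
      P.length ≤ k + Q.length := by
  induction Q with
  | nil =>
    intro c k _ hQ hck
    by_contra! hk
    have hlt := phraseStart_lt_length hP.2.1 (k := k) (by omega)
    have hle := List.drop_eq_nil_iff.mp hQ.symm
    rw [hP.1] at hlt
    omega
  | cons p Q ih =>
    rintro c k (_ | ⟨hp, hQ⟩) hflat hck
    rw [List.flatten_cons] at hflat
    by_cases hk : P.length ≤ k
    · simp only [List.length_cons]
      omega
    have hps : p <+: s.drop c := hflat ▸ List.prefix_append _ _
    have hpos := List.length_pos_iff.mpr (hP.2.1 _ (List.getElem_mem (not_le.mp hk)))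
    have hstep : c + p.length ≤ phraseStart P (k + 1) := by
      rw [phraseStart_succ (not_le.mp hk)]
      exact add_length_le_of_maximal hck hps hp hpos fun q => hP.length_le_length_getElem _
    have htake : s.take c ++ p = s.take (c + p.length) := by
      rw [List.take_add, ← hflat, List.take_left]
    have hdrop : Q.flatten = s.drop (c + p.length) := by
      rw [← List.drop_drop, ← hflat, List.drop_left]
    have hrest := ih (htake ▸ hQ) hdrop hstep
    simp only [List.length_cons]
    omega

theorem length_le_of_copyParse (hP : IsLZ77Parse s P) (hQ : CopyParse [] Q)
    (hQs : Q.flatten = s) : P.length ≤ Q.length := by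
  simpa using hP.length_le_add_length (c := 0) (k := 0) (by simpa using hQ) (by simpa) le_rfl

end IsLZ77Parse

/-! ## Straight-line programs -/

/-- Entry `k` of a straight-line program is a letter `inl a` or the concatenation `inr (i, j)` of
the strings of entries `i` and `j`, which must come earlier (`WellFormed`). -/
abbrev SLP (α : Type*) := List (α ⊕ ℕ × ℕ)

namespace SLP

variable {α β : Type*}

def fold [Inhabited β] (leaf : α → β) (node : β → β → β) (D : SLP α) : ℕ → β
  | k =>
    match D[k]? with
    | some (Sum.inl a) => leaf a
    | some (Sum.inr (i, j)) =>
      if _ : i < k ∧ j < k then node (fold leaf node D i) (fold leaf node D j) else default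
    | none => default
  termination_by k => k

section fold

variable [Inhabited β] {leaf : α → β} {node : β → β → β} {D E : SLP α} {k i j : ℕ}
  {a : α}

theorem fold_of_getElem?_eq_inl (h : D[k]? = some (Sum.inl a)) : fold leaf node D k = leaf a := by
  rw [fold, h]

theorem fold_of_getElem?_eq_inr (h : D[k]? = some (Sum.inr (i, j))) (hi : i < k) (hj : j < k) :
    fold leaf node D k = node (fold leaf node D i) (fold leaf node D j) := by
  rw [fold, h]
  exact dif_pos ⟨hi, hj⟩

theorem fold_append (hk : k < D.length) : fold leaf node (D ++ E) k = fold leaf node D k := by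
  induction k using Nat.strong_induction_on with
  | _ k ih =>
    have hget : (D ++ E)[k]? = D[k]? := List.getElem?_append_left hk
    rw [fold, fold, hget]
    rcases D[k]? with _ | _ | ⟨i, j⟩
    · rfl
    · rfl
    · dsimp only
      split_ifs with hij
      · rw [ih i hij.1 (hij.1.trans hk), ih j hij.2 (hij.2.trans hk)]
      · rfl

theorem fold_concat_inr (hi : i < D.length) (hj : j < D.length) :
    fold leaf node (D ++ [Sum.inr (i, j)]) D.length =
      node (fold leaf node D i) (fold leaf node D j) := by
  rw [fold_of_getElem?_eq_inr (List.getElem?_concat_length ..) hi hj, fold_append hi,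
    fold_append hj]

theorem fold_concat_inl : fold leaf node (D ++ [Sum.inl a]) D.length = leaf a :=
  fold_of_getElem?_eq_inl (List.getElem?_concat_length ..)

end fold

def eval (D : SLP α) : ℕ → List α := fold (fun a => [a]) (· ++ ·) D

def height (D : SLP α) : ℕ → ℕ := fold (fun _ => 0) (fun m n => max m n + 1) D

def WellFormed (D : SLP α) : Prop :=
  ∀ k i j : ℕ, D[k]? = some (Sum.inr (i, j)) → i < k ∧ j < k

structure Represents (D : SLP α) (k : ℕ) (w : List α) (h : ℕ) : Prop where
  lt_length : k < D.length
  eval_eq : eval D k = w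
  height_le : height D k ≤ h

variable {D D' : SLP α} {k i j m n : ℕ} {a : α} {u v w : List α}

theorem WellFormed.concat (hD : WellFormed D) {e : α ⊕ ℕ × ℕ}
    (he : ∀ i j, e = Sum.inr (i, j) → i < D.length ∧ j < D.length) :
    WellFormed (D ++ [e]) := by
  intro k i j h
  rcases lt_or_ge k D.length with hk | hk
  · exact hD k i j ((List.getElem?_append_left hk).symm.trans h)
  · rw [List.getElem?_append_right hk, List.getElem?_singleton] at h
    split_ifs at h with hk₀
    have := he i j (Option.some.inj h)
    omega

theorem WellFormed.concat_inl (hD : WellFormed D) : WellFormed (D ++ [Sum.inl a]) :=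
  hD.concat nofun

theorem WellFormed.concat_inr (hD : WellFormed D) (hi : i < D.length) (hj : j < D.length) :
    WellFormed (D ++ [Sum.inr (i, j)]) :=
  hD.concat fun _ _ h => by cases h; exact ⟨hi, hj⟩

namespace Represents

theorem mono (hk : Represents D k w m) (hmn : m ≤ n) : Represents D k w n :=
  ⟨hk.lt_length, hk.eval_eq, hk.height_le.trans hmn⟩

theorem of_prefix (hk : Represents D k w n) (hDD' : D <+: D') : Represents D' k w n := by
  obtain ⟨E, rfl⟩ := hDD'
  exact ⟨hk.lt_length.trans_le (by simp), (fold_append hk.lt_length).trans hk.eval_eq,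
    (fold_append hk.lt_length).trans_le hk.height_le⟩

theorem exists_inr (hk : Represents D k w n) (hw : 1 < w.length) :
    ∃ i j, D[k]? = some (Sum.inr (i, j)) := by
  rcases h : D[k]? with _ | a | ⟨i, j⟩
  · simp [hk.lt_length] at h
  · rw [← hk.eval_eq, eval, fold_of_getElem?_eq_inl h] at hw
    simp at hw
  · exact ⟨i, j, rfl⟩

theorem of_inr (hD : WellFormed D) (hk : Represents D k w n) (he : D[k]? = some (Sum.inr (i, j))) :
    ∃ m, n = m + 1 ∧ w = eval D i ++ eval D j ∧
      Represents D i (eval D i) m ∧ Represents D j (eval D j) m := by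
  obtain ⟨hi, hj⟩ := hD k i j he
  have hheight := hk.height_le
  rw [height, fold_of_getElem?_eq_inr he hi hj] at hheight
  refine ⟨n - 1, by omega, ?_, ⟨hi.trans hk.lt_length, rfl, by rw [height]; omega⟩,
    ⟨hj.trans hk.lt_length, rfl, by rw [height]; omega⟩⟩
  rw [← hk.eval_eq, eval, fold_of_getElem?_eq_inr he hi hj]

theorem concat_inr (hi : Represents D i u m) (hj : Represents D j v m) :
    Represents (D ++ [Sum.inr (i, j)]) D.length (u ++ v) (m + 1) := by
  refine ⟨by simp, ?_, ?_⟩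
  · rw [eval, fold_concat_inr hi.lt_length hj.lt_length, ← hi.eval_eq, ← hj.eval_eq]
    rfl
  · have hheight : max (height D i) (height D j) + 1 ≤ m + 1 := by
      have := hi.height_le
      have := hj.height_le
      omega
    rwa [height, fold_concat_inr hi.lt_length hj.lt_length]

theorem concat_inl : Represents (D ++ [Sum.inl a]) D.length [a] 0 :=
  ⟨by simp, fold_concat_inl, by rw [height, fold_concat_inl]⟩

end Represents

theorem exists_represents_take (hD : WellFormed D) (hk : Represents D k w n) {c : ℕ} (hc : 0 < c)
    (hcw : c ≤ w.length) :
    ∃ D' x, WellFormed D' ∧ D <+: D' ∧ D'.length ≤ D.length + n ∧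
      Represents D' x (w.take c) n := by
  induction n using Nat.strong_induction_on generalizing D k w c with
  | _ n ih =>
  rcases hcw.eq_or_lt with rfl | hlt
  · exact ⟨D, k, hD, List.prefix_refl D, by omega, by rwa [List.take_length]⟩
  obtain ⟨i, j, he⟩ := hk.exists_inr (by omega)
  obtain ⟨m, rfl, rfl, hi, hj⟩ := hk.of_inr hD he
  by_cases hci : c ≤ (eval D i).length
  · obtain ⟨D', x, hD', hDD', hlen, hx⟩ := ih m (by omega) hD hi hc hci
    refine ⟨D', x, hD', hDD', by omega, ?_⟩
    rw [List.take_append_of_le_length hci]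
    exact hx.mono (by omega)
  · obtain ⟨D', x, hD', hDD', hlen, hx⟩ :=
      ih m (by omega) hD hj (c := c - (eval D i).length) (by omega)
        (by rw [List.length_append] at hlt; omega)
    have hi' := hi.of_prefix hDD'
    refine ⟨D' ++ [Sum.inr (i, x)], D'.length, hD'.concat_inr hi'.lt_length hx.lt_length,
      hDD'.trans (List.prefix_append _ _), by rw [List.length_append, List.length_singleton]; omega,
      ?_⟩
    rw [List.take_append, List.take_of_length_le (by omega)]
    exact hi'.concat_inr hx

theorem exists_represents_drop (hD : WellFormed D) (hk : Represents D k w n) {c : ℕ}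
    (hcw : c < w.length) :
    ∃ D' x, WellFormed D' ∧ D <+: D' ∧ D'.length ≤ D.length + n ∧
      Represents D' x (w.drop c) n := by
  induction n using Nat.strong_induction_on generalizing D k w c with
  | _ n ih =>
  rcases Nat.eq_zero_or_pos c with rfl | hc
  · exact ⟨D, k, hD, List.prefix_refl D, by omega, by rwa [List.drop_zero]⟩
  obtain ⟨i, j, he⟩ := hk.exists_inr (by omega)
  obtain ⟨m, rfl, rfl, hi, hj⟩ := hk.of_inr hD he
  by_cases hci : (eval D i).length ≤ c
  · obtain ⟨D', x, hD', hDD', hlen, hx⟩ :=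
      ih m (by omega) hD hj
        (show c - (eval D i).length < (eval D j).length by rw [List.length_append] at hcw; omega)
    refine ⟨D', x, hD', hDD', by omega, ?_⟩
    rw [List.drop_append, List.drop_of_length_le hci, List.nil_append]
    exact hx.mono (by omega)
  · obtain ⟨D', x, hD', hDD', hlen, hx⟩ :=
      ih m (by omega) hD hi (show c < (eval D i).length by omega)
    have hj' := hj.of_prefix hDD'
    refine ⟨D' ++ [Sum.inr (x, j)], D'.length, hD'.concat_inr hx.lt_length hj'.lt_length,
      hDD'.trans (List.prefix_append _ _), by rw [List.length_append, List.length_singleton]; omega,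
      ?_⟩
    rw [List.drop_append_of_le_length (by omega)]
    exact hx.concat_inr hj'

theorem exists_represents_infix (hD : WellFormed D) (hk : Represents D k w n) {p : List α}
    (hp : p <:+: w) (hpne : p ≠ []) :
    ∃ D' x, WellFormed D' ∧ D <+: D' ∧ D'.length ≤ D.length + 2 * n ∧
      Represents D' x p n := by
  obtain ⟨u, v, rfl⟩ := hp
  have hpos := List.length_pos_iff.mpr hpne
  obtain ⟨D₁, x, hD₁, hDD₁, hlen₁, hx⟩ :=
    exists_represents_take hD hk (c := (u ++ p).length) (by rw [List.length_append]; omega)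
      (by simp)
  rw [List.take_left] at hx
  obtain ⟨D₂, y, hD₂, hDD₂, hlen₂, hy⟩ :=
    exists_represents_drop hD₁ hx (c := u.length) (by rw [List.length_append]; omega)
  rw [List.drop_left] at hy
  exact ⟨D₂, y, hD₂, hDD₁.trans hDD₂, by omega, hy⟩

def Encodes (D : SLP α) (w : List α) (n : ℕ) : Prop :=
  WellFormed D ∧ Represents D (D.length - 1) w n

namespace Encodes

theorem append_letter (h : Encodes D w n) (a : α) :
    Encodes (D ++ [Sum.inl a] ++ [Sum.inr (D.length - 1, D.length)]) (w ++ [a]) (n + 1) := by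
  obtain ⟨hD, hroot⟩ := h
  have hroot' := hroot.of_prefix (List.prefix_append D [Sum.inl a])
  have hleaf : Represents (D ++ [Sum.inl a]) D.length [a] n :=
    Represents.concat_inl.mono (Nat.zero_le n)
  refine ⟨hD.concat_inl.concat_inr hroot'.lt_length hleaf.lt_length, ?_⟩
  simpa using hroot'.concat_inr hleaf

theorem append_infix (h : Encodes D w n) {p : List α} (hp : p <:+: w) (hpne : p ≠ []) :
    ∃ D', D'.length ≤ D.length + 2 * n + 1 ∧ Encodes D' (w ++ p) (n + 1) := by
  obtain ⟨hD, hroot⟩ := h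
  obtain ⟨D', y, hD', hDD', hlen, hy⟩ := exists_represents_infix hD hroot hp hpne
  have hroot' := hroot.of_prefix hDD'
  refine ⟨D' ++ [Sum.inr (D.length - 1, y)], ?_,
    hD'.concat_inr hroot'.lt_length hy.lt_length, by simpa using hroot'.concat_inr hy⟩
  rw [List.length_append, List.length_singleton]
  omega

theorem append_phrase (h : Encodes D w n) {p : List α} (hpne : p ≠ [])
    (hp : p.length = 1 ∨ p <:+: w) :
    ∃ D', D'.length ≤ D.length + 2 * n + 2 ∧ Encodes D' (w ++ p) (n + 1) := by
  rcases hp with hp | hp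
  · obtain ⟨a, rfl⟩ := List.length_eq_one_iff.mp hp
    exact ⟨_, by simp, h.append_letter a⟩
  · obtain ⟨D', hlen, hD'⟩ := h.append_infix hp hpne
    exact ⟨D', by omega, hD'⟩

theorem append_copyParse (h : Encodes D w n) {Q : List (List α)} (hQ : CopyParse w Q)
    (hne : ∀ p ∈ Q, p ≠ []) :
    ∃ D', D'.length ≤ D.length + 2 * Q.length * (n + Q.length) ∧
      Encodes D' (w ++ Q.flatten) (n + Q.length) := by
  induction hQ generalizing D n with
  | nil => exact ⟨D, by simp, by simpa using h⟩
  | cons hp _ ih =>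
    obtain ⟨D₁, hlen₁, hD₁⟩ := h.append_phrase (hne _ List.mem_cons_self) hp
    obtain ⟨D₂, hlen₂, hD₂⟩ := ih hD₁ fun q hq => hne q (List.mem_cons_of_mem _ hq)
    refine ⟨D₂, ?_, by simpa [add_assoc, add_comm 1] using hD₂⟩
    simp only [List.length_cons] at hlen₂ ⊢
    nlinarith

end Encodes

theorem exists_encodes_of_copyParse {Q : List (List α)} (hQ : CopyParse [] Q)
    (hne : ∀ p ∈ Q, p ≠ []) (hQ₀ : Q ≠ []) :
    ∃ D n, D.length ≤ 2 * Q.length ^ 2 ∧ Encodes D Q.flatten n := by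
  obtain ⟨p, Q, rfl⟩ := List.exists_cons_of_ne_nil hQ₀
  obtain _ | ⟨hp, hQ⟩ := hQ
  obtain ⟨a, rfl⟩ : ∃ a, p = [a] := by
    rcases hp with hp | hp
    · exact List.length_eq_one_iff.mp hp
    · exact absurd (List.eq_nil_of_infix_nil hp) (hne p List.mem_cons_self)
  have h₀ : Encodes [Sum.inl a] [a] 0 :=
    ⟨WellFormed.concat_inl (D := []) fun _ _ _ h => by simp at h,
      Represents.concat_inl (D := [])⟩
  obtain ⟨D, hlen, hD⟩ := h₀.append_copyParse hQ fun q hq => hne q (List.mem_cons_of_mem _ hq)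
  refine ⟨D, _, ?_, hD⟩
  simp only [List.length_cons, List.length_nil, zero_add] at hlen ⊢
  nlinarith

end SLP

/-! ## The grammar of a straight-line program -/

namespace SLP

variable {α : Type*} {D : SLP α} {w : List α} {n : ℕ}

def rhs : α ⊕ ℕ × ℕ → List (Symbol α ℕ)
  | .inl a => [.terminal a]
  | .inr (i, j) => [.nonterminal i, .nonterminal j]

abbrev toGrammar (D : SLP α) : ContextFreeGrammar α where
  NT := ℕ
  initial := D.length - 1
  rules := Finset.univ.map
    ⟨fun k : Fin D.length => ⟨k, rhs D[k]⟩,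
      fun _ _ h => Fin.ext (congrArg ContextFreeRule.input h)⟩

theorem mem_toGrammar_rules {r : ContextFreeRule α ℕ} :
    r ∈ (toGrammar D).rules ↔ ∃ (k : ℕ) (hk : k < D.length), r = ⟨k, rhs D[k]⟩ := by
  simp [toGrammar, eq_comm, Fin.exists_iff, Function.Embedding.coeFn_mk]

theorem isCNF_toGrammar {α : Type} (D : SLP α) : IsCNF (toGrammar D) := by
  intro r hr
  obtain ⟨k, hk, rfl⟩ := mem_toGrammar_rules.mp hr
  rcases D[k] with a | ⟨i, j⟩
  · exact .inl ⟨a, rfl⟩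
  · exact .inr ⟨i, j, rfl⟩

theorem grammarSize_toGrammar_le {α : Type} (D : SLP α) :
    grammarSize (toGrammar D) ≤ 2 * D.length := by
  have hrhs : ∀ e : α ⊕ ℕ × ℕ, (rhs e).length ≤ 2 := by rintro (_ | _) <;> simp [rhs]
  calc grammarSize (toGrammar D) = ∑ k : Fin D.length, (rhs D[k]).length := by
        simp [grammarSize, toGrammar, Finset.sum_map, Function.Embedding.coeFn_mk]
    _ ≤ ∑ _k : Fin D.length, 2 := Finset.sum_le_sum fun k _ => hrhs _
    _ = 2 * D.length := by simp [mul_comm]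

def evalSymbol (D : SLP α) : Symbol α ℕ → List α
  | .terminal a => [a]
  | .nonterminal k => eval D k

theorem flatMap_evalSymbol_map_terminal (w : List α) :
    (w.map Symbol.terminal).flatMap (evalSymbol D) = w := by
  induction w <;> simp [evalSymbol, *]

theorem flatMap_evalSymbol_rhs (hD : WellFormed D) {k : ℕ} (hk : k < D.length) :
    (rhs D[k]).flatMap (evalSymbol D) = eval D k := by
  have hk : D[k]? = some D[k] := List.getElem?_eq_getElem hk
  rcases he : D[k] with a | ⟨i, j⟩ <;> rw [he] at hk
  · simp [rhs, evalSymbol, eval, fold_of_getElem?_eq_inl hk]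
  · obtain ⟨hi, hj⟩ := hD k i j hk
    simp [rhs, evalSymbol, eval, fold_of_getElem?_eq_inr hk hi hj]

theorem derives_eval (hD : WellFormed D) (k : ℕ) (hk : k < D.length) :
    (toGrammar D).Derives [.nonterminal k] ((eval D k).map .terminal) := by
  induction k using Nat.strong_induction_on with
  | _ k ih =>
  have hrule : (toGrammar D).Produces [.nonterminal k] (rhs D[k]) :=
    ⟨_, mem_toGrammar_rules.mpr ⟨k, hk, rfl⟩, ContextFreeRule.Rewrites.input_output⟩
  have hk' : D[k]? = some D[k] := List.getElem?_eq_getElem hk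
  refine hrule.trans_derives ?_
  rcases he : D[k] with a | ⟨i, j⟩ <;> rw [he] at hk'
  · rw [eval, fold_of_getElem?_eq_inl hk']
    exact .refl _
  · obtain ⟨hi, hj⟩ := hD k i j hk'
    rw [eval, fold_of_getElem?_eq_inr hk' hi hj, List.map_append]
    exact ((ih i hi (hi.trans hk)).append_right _).trans
      ((ih j hj (hj.trans hk)).append_left _)

theorem flatMap_evalSymbol_eq_of_derives (hD : WellFormed D) {u v : List (Symbol α ℕ)}
    (h : (toGrammar D).Derives u v) : u.flatMap (evalSymbol D) = v.flatMap (evalSymbol D) := by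
  induction h with
  | refl => rfl
  | tail _ hp ih =>
    obtain ⟨r, hr, hrw⟩ := hp
    obtain ⟨k, hk, rfl⟩ := mem_toGrammar_rules.mp hr
    obtain ⟨p, q, rfl, rfl⟩ := hrw.exists_parts
    rw [ih]
    simp [flatMap_evalSymbol_rhs hD hk, evalSymbol]

theorem Encodes.language_toGrammar (h : Encodes D w n) :
    (toGrammar D).language = {w} := by
  ext w'
  rw [ContextFreeGrammar.mem_language_iff]
  change _ ↔ w' = w
  constructor
  · intro hw'
    have := flatMap_evalSymbol_eq_of_derives h.1 hw'
    simpa [evalSymbol, flatMap_evalSymbol_map_terminal, h.2.eval_eq] using this.symm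
  · rintro rfl
    rw [← h.2.eval_eq]
    exact derives_eval h.1 _ h.2.lt_length

end SLP

/-! ## From a grammar to a copy parse -/

-- The decidability instances are implicit so that they unify with those of the goal.
theorem Finset.sum_filter_add_le_sum_filter {ι M : Type*} [AddCommMonoid M] [Preorder M]
    [CanonicallyOrderedAdd M] {s : Finset ι} {p q : ι → Prop} {_ : DecidablePred p}
    {_ : DecidablePred q} {f : ι → M} {b : ι} (hb : b ∈ s) (hpb : ¬ p b) (hqb : q b)
    (hpq : ∀ i, p i → q i) :
    ∑ i ∈ s with p i, f i + f b ≤ ∑ i ∈ s with q i, f i := by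
  rw [add_comm, ← Finset.sum_cons (f := f) (by simp [hpb] : b ∉ s.filter p)]
  refine Finset.sum_le_sum_of_subset fun i hi => ?_
  simp only [Finset.mem_cons, Finset.mem_filter] at hi ⊢
  rcases hi with rfl | ⟨hi, hpi⟩
  exacts [⟨hb, hqb⟩, ⟨hi, hpq i hpi⟩]

theorem ContextFreeRule.Rewrites.append_cases {α N : Type*} {r : ContextFreeRule α N}
    {u v t : List (Symbol α N)} (h : r.Rewrites (u ++ v) t) :
    (∃ u', r.Rewrites u u' ∧ t = u' ++ v) ∨ (∃ v', r.Rewrites v v' ∧ t = u ++ v') := by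
  induction u generalizing t with
  | nil => exact .inr ⟨t, h, rfl⟩
  | cons σ u ih =>
    cases h with
    | head => exact .inl ⟨r.output ++ u, .head u, by simp⟩
    | cons _ h =>
      rcases ih h with ⟨u', hu', rfl⟩ | ⟨v', hv', rfl⟩
      · exact .inl ⟨σ :: u', .cons σ hu', rfl⟩
      · exact .inr ⟨v', hv', rfl⟩

namespace ContextFreeGrammar

variable {α : Type*} {G : ContextFreeGrammar α}

inductive DerivesIn_s10 (G : ContextFreeGrammar α) :
    List (Symbol α G.NT) → List (Symbol α G.NT) → ℕ → Prop
  | refl (u : List (Symbol α G.NT)) : G.DerivesIn_s10 u u 0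
  | head {u v w : List (Symbol α G.NT)} {n : ℕ} :
      G.Produces u v → G.DerivesIn_s10 v w n → G.DerivesIn_s10 u w (n + 1)

section DerivesIn_s10

variable {u v t : List (Symbol α G.NT)} {n : ℕ}

theorem DerivesIn_s10.derives (h : G.DerivesIn_s10 u v n) : G.Derives u v := by
  induction h with
  | refl u => exact .refl u
  | head hp _ ih => exact hp.trans_derives ih

theorem Derives.exists_derivesIn_s10 (h : G.Derives u v) : ∃ n, G.DerivesIn_s10 u v n := by
  induction h using Relation.ReflTransGen.head_induction_on with
  | refl => exact ⟨0, .refl _⟩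
  | head hp _ ih =>
    obtain ⟨n, hn⟩ := ih
    exact ⟨n + 1, .head hp hn⟩

theorem DerivesIn_s10.eq_of_zero (h : G.DerivesIn_s10 u v 0) : u = v := by
  cases h
  rfl

theorem DerivesIn_s10.exists_produces_of_succ (h : G.DerivesIn_s10 u t (n + 1)) :
    ∃ v, G.Produces u v ∧ G.DerivesIn_s10 v t n := by
  cases h with
  | head hp hd => exact ⟨_, hp, hd⟩

theorem Produces.append_cases (h : G.Produces (u ++ v) t) :
    (∃ u', G.Produces u u' ∧ t = u' ++ v) ∨ (∃ v', G.Produces v v' ∧ t = u ++ v') := by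
  obtain ⟨r, hr, hrw⟩ := h
  rcases hrw.append_cases with ⟨u', hu', rfl⟩ | ⟨v', hv', rfl⟩
  · exact .inl ⟨u', ⟨r, hr, hu'⟩, rfl⟩
  · exact .inr ⟨v', ⟨r, hr, hv'⟩, rfl⟩

theorem DerivesIn_s10.append_split (h : G.DerivesIn_s10 (u ++ v) t n) :
    ∃ t₁ t₂ n₁ n₂, t = t₁ ++ t₂ ∧ n₁ + n₂ = n ∧
      G.DerivesIn_s10 u t₁ n₁ ∧ G.DerivesIn_s10 v t₂ n₂ := by
  generalize hs : u ++ v = s at h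
  induction h generalizing u v with
  | refl => exact ⟨u, v, 0, 0, hs.symm, rfl, .refl u, .refl v⟩
  | head hp _ ih =>
    subst hs
    rcases hp.append_cases with ⟨u', hu', rfl⟩ | ⟨v', hv', rfl⟩
    · obtain ⟨t₁, t₂, n₁, n₂, rfl, rfl, h₁, h₂⟩ := ih rfl
      exact ⟨t₁, t₂, n₁ + 1, n₂, rfl, by omega, .head hu' h₁, h₂⟩
    · obtain ⟨t₁, t₂, n₁, n₂, rfl, rfl, h₁, h₂⟩ := ih rfl
      exact ⟨t₁, t₂, n₁, n₂ + 1, rfl, by omega, h₁, .head hv' h₂⟩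

theorem DerivesIn_s10.eq_of_map_terminal {w : List α} (h : G.DerivesIn_s10 (w.map .terminal) v n) :
    v = w.map .terminal := by
  cases h with
  | refl => rfl
  | head hp _ =>
    obtain ⟨r, -, hr⟩ := hp.exists_nonterminal_input_mem
    simp at hr

theorem DerivesIn_s10.append_map_terminal {w : List α} (h : G.DerivesIn_s10 (u ++ v) (w.map .terminal) n) :
    ∃ w₁ w₂ n₁ n₂, w = w₁ ++ w₂ ∧ n₁ + n₂ = n ∧
      G.DerivesIn_s10 u (w₁.map .terminal) n₁ ∧ G.DerivesIn_s10 v (w₂.map .terminal) n₂ := by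
  obtain ⟨t₁, t₂, n₁, n₂, ht, hn, h₁, h₂⟩ := h.append_split
  obtain ⟨w₁, w₂, rfl, rfl, rfl⟩ := List.map_eq_append_iff.mp ht
  exact ⟨w₁, w₂, n₁, n₂, rfl, hn, h₁, h₂⟩

theorem Produces.exists_rule_of_singleton {B : G.NT} (h : G.Produces [.nonterminal B] v) :
    ∃ r ∈ G.rules, r.input = B ∧ v = r.output := by
  obtain ⟨r, hr, hrw⟩ := h
  obtain ⟨p, q, hpq, rfl⟩ := hrw.exists_parts
  have hlen := congrArg List.length hpq
  simp only [List.length_append, List.length_singleton] at hlen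
  obtain ⟨rfl, rfl⟩ : p = [] ∧ q = [] := by
    constructor <;> apply List.eq_nil_of_length_eq_zero <;> omega
  simp only [List.nil_append, List.append_nil, List.cons.injEq, Symbol.nonterminal.injEq] at hpq
  exact ⟨r, hr, hpq.1.symm, by simp⟩

theorem DerivesIn_s10.exists_minimal_rule {B : G.NT} {w : List α}
    (h : G.DerivesIn_s10 [.nonterminal B] (w.map .terminal) n) :
    ∃ r ∈ G.rules, r.input = B ∧ ∃ m < n, G.DerivesIn_s10 r.output (w.map .terminal) m ∧
      ∀ k ≤ m, ¬ G.DerivesIn_s10 [.nonterminal B] (w.map .terminal) k := by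
  classical
  have hex : ∃ k, G.DerivesIn_s10 [.nonterminal B] (w.map .terminal) k := ⟨n, h⟩
  obtain ⟨m, hm⟩ := Nat.exists_eq_succ_of_ne_zero (n := Nat.find hex) fun h₀ => by
    have := (h₀ ▸ Nat.find_spec hex).eq_of_zero
    cases w <;> simp at this
  have hspec := Nat.find_spec hex
  rw [hm] at hspec
  obtain ⟨v, hp, hd⟩ := hspec.exists_produces_of_succ
  obtain ⟨r, hr, hrB, rfl⟩ := hp.exists_rule_of_singleton
  exact ⟨r, hr, hrB, m, by have := Nat.find_min' hex h; omega, hd,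
    fun k hk hk' => Nat.find_min hex (by omega) hk'⟩

end DerivesIn_s10

def YieldsOnly (G : ContextFreeGrammar α) (u : List (Symbol α G.NT)) (w : List α) : Prop :=
  ∀ w', G.Derives u (w'.map .terminal) → w' = w

def YieldsInfixes (G : ContextFreeGrammar α) (S : Set G.NT) (x : List α) : Prop :=
  ∀ B ∈ S, ∃ y, G.YieldsOnly [.nonterminal B] y ∧ y <:+: x

def NoShortDerivation (G : ContextFreeGrammar α) (T : Set G.NT) (n : ℕ) : Prop :=
  ∀ A ∈ T, ∀ (y : List α) k, k ≤ n → ¬ G.DerivesIn_s10 [.nonterminal A] (y.map .terminal) k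

open Classical in
noncomputable def ruleSizeOutside (G : ContextFreeGrammar α) (E : Set G.NT) : ℕ :=
  ∑ r ∈ G.rules with r.input ∉ E, r.output.length

section Invariants

variable {u v : List (Symbol α G.NT)} {w w₁ w₂ x y : List α} {S T E : Set G.NT} {m n : ℕ}

theorem YieldsOnly.left (h : G.YieldsOnly (u ++ v) (w₁ ++ w₂))
    (hv : G.Derives v (w₂.map .terminal)) : G.YieldsOnly u w₁ := fun w' hu =>
  List.append_cancel_right <| h (w' ++ w₂) <| by
    simpa using (hu.append_right v).trans (hv.append_left _)

theorem YieldsOnly.right (h : G.YieldsOnly (u ++ v) (w₁ ++ w₂))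
    (hu : G.Derives u (w₁.map .terminal)) : G.YieldsOnly v w₂ := fun w' hv =>
  List.append_cancel_left <| h (w₁ ++ w') <| by
    simpa using (hu.append_right v).trans (hv.append_left _)

theorem YieldsOnly.of_mem_rules {r : ContextFreeRule α G.NT}
    (h : G.YieldsOnly [.nonterminal r.input] w) (hr : r ∈ G.rules) :
    G.YieldsOnly r.output w := fun w' hw' =>
  h w' (Produces.trans_derives ⟨r, hr, .input_output⟩ hw')

theorem YieldsInfixes.append_right (h : G.YieldsInfixes S x) : G.YieldsInfixes S (x ++ y) :=
  fun B hB => (h B hB).imp fun _ hy => ⟨hy.1, hy.2.trans (List.infix_append [] x y)⟩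

theorem YieldsInfixes.insert {B : G.NT} (h : G.YieldsInfixes S x)
    (hB : G.YieldsOnly [.nonterminal B] y) (hy : y <:+: x) : G.YieldsInfixes (insert B S) x := by
  rintro A (rfl | hA)
  exacts [⟨y, hB, hy⟩, h A hA]

theorem NoShortDerivation.mono (h : G.NoShortDerivation T n) (hmn : m ≤ n) :
    G.NoShortDerivation T m :=
  fun A hA y k hk => h A hA y k (hk.trans hmn)

theorem ruleSizeOutside_insert_add_le {r : ContextFreeRule α G.NT} (hr : r ∈ G.rules)
    (hE : r.input ∉ E) :
    G.ruleSizeOutside (insert r.input E) + r.output.length ≤ G.ruleSizeOutside E :=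
  Finset.sum_filter_add_le_sum_filter hr (by simp) hE fun _ h => h ∘ Set.mem_insert_of_mem _

end Invariants

/-- The invariant of the left-to-right walk through a derivation `u ⇒ⁿ w`: `x` is the text
produced so far, the nonterminals of `S` have been expanded before (so an occurrence costs one
phrase), those of `T` are being expanded (so they cannot occur again), and each phrase is paid for
by a symbol of `u` or by the rules of a nonterminal outside `S ∪ T`. -/
def CopyParseBound (G : ContextFreeGrammar α) (u : List (Symbol α G.NT)) (n : ℕ) : Prop :=
  ∀ (w x : List α) (S T : Set G.NT), G.DerivesIn_s10 u (w.map .terminal) n → G.YieldsOnly u w →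
    G.YieldsInfixes S x → G.NoShortDerivation T n →
    ∃ Q S', Q.flatten = w ∧ CopyParse x Q ∧ G.YieldsInfixes S' (x ++ w) ∧
      Q.length + G.ruleSizeOutside (S' ∪ T) ≤ u.length + G.ruleSizeOutside (S ∪ T)

section CopyParseBound

variable {u v : List (Symbol α G.NT)} {n : ℕ}

theorem copyParseBound_nil : G.CopyParseBound [] n := by
  intro w x S T hd _ hS _
  have hw := hd.eq_of_map_terminal (w := [])
  rw [List.map_nil, List.map_eq_nil_iff] at hw
  subst hw
  exact ⟨[], S, rfl, .nil x, by simpa using hS, by simp⟩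

theorem copyParseBound_terminal (a : α) : G.CopyParseBound [.terminal a] n := by
  intro w x S T hd _ hS _
  obtain rfl : w = [a] := by simpa [eq_comm] using hd.eq_of_map_terminal (w := [a])
  exact ⟨[[a]], S, by simp, .cons (.inl rfl) (.nil _), hS.append_right, by simp⟩

theorem CopyParseBound.append (hu : ∀ k ≤ n, G.CopyParseBound u k)
    (hv : ∀ k ≤ n, G.CopyParseBound v k) : G.CopyParseBound (u ++ v) n := by
  intro w x S T hd hw hS hT
  obtain ⟨w₁, w₂, n₁, n₂, rfl, rfl, hd₁, hd₂⟩ := hd.append_map_terminal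
  obtain ⟨Q₁, S₁, rfl, hQ₁, hS₁, hlen₁⟩ :=
    hu n₁ (by omega) w₁ x S T hd₁ (hw.left hd₂.derives) hS (hT.mono (by omega))
  obtain ⟨Q₂, S₂, rfl, hQ₂, hS₂, hlen₂⟩ :=
    hv n₂ (by omega) w₂ _ S₁ T hd₂ (hw.right hd₁.derives) hS₁ (hT.mono (by omega))
  refine ⟨Q₁ ++ Q₂, S₂, by simp, hQ₁.append hQ₂, by simpa using hS₂, ?_⟩
  simp only [List.length_append] at hlen₁ hlen₂ ⊢
  omega

theorem exists_copyParse_of_notMem (ih : ∀ k < n, ∀ u, G.CopyParseBound u k) {B : G.NT}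
    {w x : List α} {S T : Set G.NT} (hd : G.DerivesIn_s10 [.nonterminal B] (w.map .terminal) n)
    (hw : G.YieldsOnly [.nonterminal B] w) (hS : G.YieldsInfixes S x)
    (hT : G.NoShortDerivation T n) (hBS : B ∉ S) :
    ∃ Q S', Q.flatten = w ∧ CopyParse x Q ∧ G.YieldsInfixes S' (x ++ w) ∧
      Q.length + G.ruleSizeOutside (S' ∪ T) ≤ G.ruleSizeOutside (S ∪ T) := by
  -- a shortest derivation of `w` from `B` cannot contain `B` again
  obtain ⟨r, hr, rfl, m, hmn, hdm, hmin⟩ := hd.exists_minimal_rule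
  have hBT : r.input ∉ T := fun h => hT _ h w n le_rfl hd
  have hT' : G.NoShortDerivation (insert r.input T) m := by
    rintro A (rfl | hA) y k hk hdk
    · exact hmin k hk (hw y hdk.derives ▸ hdk)
    · exact hT A hA y k (by omega) hdk
  obtain ⟨Q, S', hQ, hQx, hS', hlen⟩ :=
    ih m hmn r.output w x S (insert r.input T) hdm (hw.of_mem_rules hr) hS hT'
  refine ⟨Q, insert r.input S', hQ, hQx, hS'.insert hw (List.suffix_append x w).isInfix, ?_⟩
  have hsize := G.ruleSizeOutside_insert_add_le hr (E := S ∪ T) (by simp [hBS, hBT])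
  simp only [Set.union_insert] at hlen
  rw [Set.insert_union]
  omega

theorem copyParseBound_nonterminal (ih : ∀ k < n, ∀ u, G.CopyParseBound u k) (B : G.NT) :
    G.CopyParseBound [.nonterminal B] n := by
  intro w x S T hd hw hS hT
  by_cases hBS : B ∈ S
  · obtain ⟨y, hy, hyx⟩ := hS B hBS
    obtain rfl := hy w hd.derives
    exact ⟨[w], S, by simp, .cons (.inr hyx) (.nil _), hS.append_right, by simp⟩
  · obtain ⟨Q, S', hQ, hQx, hS', hlen⟩ := exists_copyParse_of_notMem ih hd hw hS hT hBS
    exact ⟨Q, S', hQ, hQx, hS', by rw [List.length_singleton]; omega⟩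

theorem copyParseBound (n : ℕ) (u : List (Symbol α G.NT)) : G.CopyParseBound u n := by
  induction n using Nat.strong_induction_on generalizing u with
  | _ n ih =>
  suffices ∀ k ≤ n, G.CopyParseBound u k from this n le_rfl
  induction u with
  | nil => exact fun _ _ => copyParseBound_nil
  | cons σ u ihu =>
    intro k hk
    refine CopyParseBound.append (u := [σ]) (fun j hj => ?_) (fun j hj => ihu j (by omega))
    cases σ with
    | terminal a => exact copyParseBound_terminal a
    | nonterminal B => exact copyParseBound_nonterminal (fun i hi => ih i (by omega)) B

end CopyParseBound

theorem exists_copyParse_of_language_eq {α : Type} {G : ContextFreeGrammar α} {s : List α}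
    (hG : G.language = {s}) :
    ∃ Q, Q.flatten = s ∧ CopyParse [] Q ∧ Q.length ≤ grammarSize G := by
  have hw : G.YieldsOnly [.nonterminal G.initial] s := fun w' h => by
    have hmem : w' ∈ G.language := (G.mem_language_iff w').mpr h
    rwa [hG] at hmem
  have hs : G.Derives [.nonterminal G.initial] (s.map .terminal) :=
    (G.mem_language_iff s).mp (by rw [hG]; rfl)
  obtain ⟨n, hd⟩ := hs.exists_derivesIn_s10
  obtain ⟨Q, _, hQ, hQx, -, hlen⟩ := exists_copyParse_of_notMem
    (fun k _ u => copyParseBound k u) hd hw (S := ∅) (T := ∅) (x := [])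
    (by simp [YieldsInfixes]) (by simp [NoShortDerivation]) (Set.notMem_empty _)
  refine ⟨Q, hQ, hQx, le_of_add_le_left (hlen.trans_eq ?_)⟩
  simp [ruleSizeOutside, grammarSize]

end ContextFreeGrammar

namespace IsLZ77Parse

variable {α : Type} {s : List α} {P : List (List α)}

theorem length_le_grammarSize (hP : IsLZ77Parse s P) {G : ContextFreeGrammar α}
    (hG : G.language = {s}) : P.length ≤ grammarSize G := by
  obtain ⟨Q, hQs, hQ, hlen⟩ := ContextFreeGrammar.exists_copyParse_of_language_eq hG
  exact (hP.length_le_of_copyParse hQ hQs).trans hlen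

theorem exists_isCNF_grammarSize_le (hP : IsLZ77Parse s P) (hs : s ≠ []) :
    ∃ G : ContextFreeGrammar α, IsCNF G ∧ G.language = {s} ∧
      grammarSize G ≤ 4 * P.length ^ 2 := by
  have hP₀ : P ≠ [] := by
    rintro rfl
    exact hs hP.1.symm
  obtain ⟨D, n, hlen, hD⟩ := SLP.exists_encodes_of_copyParse hP.copyParse hP.2.1 hP₀
  rw [hP.1] at hD
  exact ⟨D.toGrammar, SLP.isCNF_toGrammar D, hD.language_toGrammar,
    (SLP.grammarSize_toGrammar_le D).trans (by omega)⟩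

end IsLZ77Parse

/-- From an LZ77 parse with `z` phrases one obtains a CNF grammar generating exactly
`{s}` of size `O(z² log z)`; since `z` is at most the size `g` of the smallest
grammar, this is an `O(g log g)`-approximation to the smallest grammar. -/
theorem cnf_from_lz77_z_squared_log_z :
    ∃ C : ℕ, 0 < C ∧ ∀ {α : Type} (s : List α) (P : List (List α)),
      1 ≤ s.length → IsLZ77Parse s P →
      ∃ G : ContextFreeGrammar α, IsCNF G ∧ G.language = {s} ∧
        grammarSize G ≤ C * P.length ^ 2 * (Nat.log 2 P.length + 1) ∧
        ∀ Gmin : ContextFreeGrammar α, Gmin.language = {s} →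
          grammarSize G ≤
            C * grammarSize Gmin ^ 2 * (Nat.log 2 (grammarSize Gmin) + 1) := by
  refine ⟨4, by norm_num, fun s P hs hP => ?_⟩
  obtain ⟨G, hCNF, hG, hsize⟩ := hP.exists_isCNF_grammarSize_le (List.ne_nil_of_length_pos hs)
  refine ⟨G, hCNF, hG, hsize.trans (Nat.le_mul_of_pos_right _ (Nat.succ_pos _)),
    fun Gmin hGmin => ?_⟩
  have hzg := hP.length_le_grammarSize hGmin
  calc grammarSize G ≤ 4 * P.length ^ 2 := hsize
    _ ≤ 4 * grammarSize Gmin ^ 2 := by gcongr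
    _ ≤ _ := Nat.le_mul_of_pos_right _ (Nat.succ_pos _)
end

section
/- Consider the random-access block data structure: for 0 ≤ i ≤ log_b n, s is partitioned into consecutive blocks of length ⌈n/bⁱ⌉, and each block stores a pointer to the first occurrence in s of its content. Then for any position p in a block at level i, if the block's pointer is q (the start of the first occurrence of the block's content), the character s[p] equals s[q + offset] where offset is p minus the block start; and q + offset lies in a well-defined block at level i+1. Iterating for log_b n levels, any character s[p] is retrieved correctly after at most log_b n + 1 pointer-following steps. -/
/-!
A block and its first occurrence are equal lists, so the character at offset `j` of the
block is the character at position `q + j`, and the occurrence `s[q..q+ℓ-1]` lies inside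
`s`. Once `bⁱ > n`, i.e. at level `⌊log_b n⌋ + 1`, the block length `⌈n/bⁱ⌉` is `1`.
-/

namespace List

variable {α : Type} {s t : List α} {q j : ℕ}

theorem getElem?_add_of_take_drop_eq (h : (s.drop q).take t.length = t) (hj : j < t.length) :
    s[q + j]? = t[j]? := by
  rw [← h, getElem?_take, if_pos hj, getElem?_drop]

theorem add_lt_length_of_take_drop_eq (h : (s.drop q).take t.length = t) (hj : j < t.length) :
    q + j < s.length := by
  have hlen := congrArg length h
  simp only [length_take, length_drop] at hlen
  omega

theorem getElem?_take_drop_sub {ℓ st p : ℕ} (hst : st ≤ p) (hp : p < st + ℓ) :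
    ((s.drop st).take ℓ)[p - st]? = s[p]? := by
  rw [getElem?_take, if_pos (by omega), getElem?_drop, Nat.add_sub_cancel' hst]

theorem sub_lt_length_take_drop {ℓ st p : ℕ} (hst : st ≤ p) (hpℓ : p < st + ℓ)
    (hp : p < s.length) : p - st < ((s.drop st).take ℓ).length := by
  simp only [length_take, length_drop]
  omega

end List

theorem Nat.add_sub_one_div_eq_one {n m : ℕ} (hn : 0 < n) (hnm : n ≤ m) :
    (n + m - 1) / m = 1 :=
  Nat.div_eq_of_lt_le (by omega) (by omega)

/-- Random-access block structure: at level `i` the string is cut into consecutive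
blocks of length `⌈n/bⁱ⌉`; if `q` is the start of the first occurrence in `s` of the
content of the block containing position `p`, then `s[p] = s[q + offset]` where
`offset` is `p` minus the block start, and `q + offset` is a valid position (hence
lies in a well-defined block at level `i+1`).  Moreover at level `⌊log_b n⌋ + 1`
the blocks have length `1`, so any character is retrieved correctly after at most
`log_b n + 1` pointer-following steps. -/
theorem random_access_block_structure {α : Type} (s : List α) (b : ℕ) (hb : 2 ≤ b)
    (i p : ℕ) (hp : p < s.length) :
    (let ℓ := (s.length + b ^ i - 1) / b ^ i
     let st := (p / ℓ) * ℓ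
     let blk := (s.drop st).take ℓ
     ∀ q : ℕ, (s.drop q).take blk.length = blk →
       (∀ q' : ℕ, q' < q → (s.drop q').take blk.length ≠ blk) →
       s[p]? = s[q + (p - st)]? ∧ q + (p - st) < s.length) ∧
    (s.length + b ^ (Nat.log b s.length + 1) - 1) / b ^ (Nat.log b s.length + 1) = 1 := by
  refine ⟨fun q hq _ => ?_, Nat.add_sub_one_div_eq_one (by omega)
    (Nat.lt_pow_succ_log_self (by omega) _).le⟩
  have hbi : 0 < b ^ i := Nat.pow_pos (by omega)
  have hℓ : 0 < (s.length + b ^ i - 1) / b ^ i := Nat.div_pos (by omega) hbi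
  have hst := Nat.div_mul_le_self p ((s.length + b ^ i - 1) / b ^ i)
  have hpℓ := Nat.lt_div_mul_add (a := p) hℓ
  have hj := List.sub_lt_length_take_drop (s := s) hst hpℓ hp
  refine ⟨?_, List.add_lt_length_of_take_drop_eq hq hj⟩
  rw [List.getElem?_add_of_take_drop_eq hq hj, List.getElem?_take_drop_sub hst hpℓ]
end
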